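/- arXiv:0901.0069 — 4 statements merged into one kernel-verified Lean document; each statement's English description precedes it below -/
import Mathlib

section
/- If μ: L → L̃ is a quasi-isomorphism of DG Lie algebras over a field K of characteristic zero and α ∈ ℏL¹[[ℏ]] is a Maurer-Cartan element, then the K[[ℏ]]-linear extension μ^α: L^α → L̃^{μ(α)} between the twisted DG Lie algebras is again a quasi-isomorphism. -/
/-!
STATEMENT 5: If `μ : L → L̃` is a quasi-isomorphism of DG Lie algebras over a
field `K` of characteristic zero and `α ∈ ℏL¹[[ℏ]]` is a Maurer–Cartan element,
then the `K[[ℏ]]`-linear extension `μ^α : L^α → L̃^{μ(α)}` between the twisted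
DG Lie algebras is again a quasi-isomorphism.

DG Lie algebras are formalized as in the accompanying development: a graded
`K`-module with differential and graded bracket; formal series in `ℏ` are
functions `ℕ → V`, and `L^α` is `L[[ℏ]]` with differential `∂ + [α,−]`.
Being a quasi-isomorphism is expressed by surjectivity and injectivity on
cohomology classes. -/

open Finset in
theorem triple_comm' {A : Type} [AddCommMonoid A] (f : ℕ → ℕ → ℕ → A) (n : ℕ) :
    ∑ pq ∈ antidiagonal n, ∑ rs ∈ antidiagonal pq.2, f pq.1 rs.1 rs.2
      = ∑ pq ∈ antidiagonal n, ∑ rs ∈ antidiagonal pq.2, f rs.1 pq.1 rs.2 := by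
  rw [Finset.sum_sigma' (antidiagonal n) (fun pq => antidiagonal pq.2),
      Finset.sum_sigma' (antidiagonal n) (fun pq => antidiagonal pq.2)]
  refine Finset.sum_nbij' (fun x => ⟨(x.2.1, x.1.1 + x.2.2), (x.1.1, x.2.2)⟩)
    (fun x => ⟨(x.2.1, x.1.1 + x.2.2), (x.1.1, x.2.2)⟩) ?_ ?_ ?_ ?_ ?_ <;>
    rintro ⟨⟨p, q⟩, r, s⟩ h <;>
    simp only [Finset.mem_sigma, Finset.HasAntidiagonal.mem_antidiagonal, and_true] at h ⊢ <;>
    obtain ⟨h1, h2⟩ := h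
  · omega
  · omega
  · have : r + s = q := h2; subst this; rfl
  · have : r + s = q := h2; subst this; rfl

open Finset in
theorem triple_rot' {A : Type} [AddCommMonoid A] (f : ℕ → ℕ → ℕ → A) (n : ℕ) :
    ∑ pq ∈ antidiagonal n, ∑ rs ∈ antidiagonal pq.2, f pq.1 rs.1 rs.2
      = ∑ pq ∈ antidiagonal n, ∑ rs ∈ antidiagonal pq.1, f rs.1 rs.2 pq.2 := by
  rw [Finset.sum_sigma' (antidiagonal n) (fun pq => antidiagonal pq.2),
      Finset.sum_sigma' (antidiagonal n) (fun pq => antidiagonal pq.1)]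
  refine Finset.sum_nbij' (fun x => ⟨(x.1.1 + x.2.1, x.2.2), (x.1.1, x.2.1)⟩)
    (fun x => ⟨(x.2.1, x.2.2 + x.1.2), (x.2.2, x.1.2)⟩) ?_ ?_ ?_ ?_ ?_ <;>
    rintro ⟨⟨p, q⟩, r, s⟩ h <;>
    simp only [Finset.mem_sigma, Finset.HasAntidiagonal.mem_antidiagonal, and_true] at h ⊢ <;>
    obtain ⟨h1, h2⟩ := h
  · omega
  · omega
  · have : r + s = q := h2; subst this; rfl
  · have : r + s = p := h2; subst this; rfl

/-- Dependent-choice style construction of a sequence satisfying a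
step-local predicate. -/
theorem exists_good_seq {X : Type} (x0 : X) (Good : ℕ → (ℕ → X) → Prop)
    (hdep : ∀ n (s t : ℕ → X), (∀ k ≤ n, s k = t k) → Good n s → Good n t)
    (hstep : ∀ n (s : ℕ → X), (∀ k < n, Good k s) → ∃ x, Good n (Function.update s n x)) :
    ∃ g : ℕ → X, ∀ n, Good n g := by
  classical
  let step : ∀ (n : ℕ), {s : ℕ → X // ∀ k < n, Good k s} → {s : ℕ → X // ∀ k < n + 1, Good k s} :=
    fun n s => ⟨Function.update s.1 n (Classical.choose (hstep n s.1 s.2)), by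
      intro k hk
      rcases Nat.lt_succ_iff_lt_or_eq.mp hk with h | h
      · refine hdep k s.1 _ (fun j hj => ?_) (s.2 k h)
        exact (Function.update_of_ne (by omega) _ _).symm
      · subst h
        exact Classical.choose_spec (hstep k s.1 s.2)⟩
  let aux : ∀ n : ℕ, {s : ℕ → X // ∀ k < n, Good k s} :=
    fun n => Nat.rec ⟨fun _ => x0, fun k hk => absurd hk k.not_lt_zero⟩ step n
  have haux_succ : ∀ n, (aux (n + 1)).1 = Function.update (aux n).1 n
      (Classical.choose (hstep n (aux n).1 (aux n).2)) := fun n => rfl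
  have hconsist : ∀ m k, k < m → (aux m).1 k = (aux (k + 1)).1 k := by
    intro m
    induction m with
    | zero => omega
    | succ m ih =>
      intro k hk
      rcases Nat.lt_succ_iff_lt_or_eq.mp hk with h | h
      · rw [haux_succ m, Function.update_of_ne (by omega), ih k h]
      · subst h; rfl
  refine ⟨fun n => (aux (n + 1)).1 n, fun n => ?_⟩
  refine hdep n (aux (n + 1)).1 _ (fun k hk => ?_) ((aux (n + 1)).2 n (by omega))
  rcases Nat.lt_or_ge k n with h | h
  · exact hconsist (n + 1) k (by omega)
  · have hkn : k = n := by omega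
    subst hkn; rfl

/-- A differential graded Lie algebra over `K`. -/
structure DGLA (K : Type) [Field K] where
  V : Type
  acg : AddCommGroup V
  mod : Module K V
  G : ℤ → Submodule K V
  internal : DirectSum.IsInternal G
  d : V →ₗ[K] V
  br : V →ₗ[K] V →ₗ[K] V
  d_sq : ∀ v, d (d v) = 0
  d_grade : ∀ i, ∀ v ∈ G i, d v ∈ G (i + 1)
  br_grade : ∀ i j, ∀ v ∈ G i, ∀ w ∈ G j, br v w ∈ G (i + j)
  br_antisymm : ∀ i j, ∀ v ∈ G i, ∀ w ∈ G j,
    br v w = -(((Int.negOnePow (i * j) : ℤˣ) : ℤ) • br w v)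
  leibniz : ∀ i, ∀ v ∈ G i, ∀ w,
    d (br v w) = br (d v) w + ((Int.negOnePow i : ℤˣ) : ℤ) • br v (d w)
  jacobi : ∀ i j, ∀ v ∈ G i, ∀ w ∈ G j, ∀ z,
    br v (br w z) = br (br v w) z + ((Int.negOnePow (i * j) : ℤˣ) : ℤ) • br w (br v z)

attribute [instance] DGLA.acg DGLA.mod

section
variable {K : Type} [Field K] [CharZero K]

/-- A morphism of DG Lie algebras. -/
structure DGLAHom (L M : DGLA K) where
  f : L.V →ₗ[K] M.V
  comm_d : ∀ v, f (L.d v) = M.d (f v)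
  comm_br : ∀ v w, f (L.br v w) = M.br (f v) (f w)
  grade : ∀ i, ∀ v ∈ L.G i, f v ∈ M.G i

variable (L M : DGLA K)

/-- `μ` is a quasi-isomorphism: it induces a bijection on cohomology
(surjectivity and injectivity on cohomology classes). -/
def DGLAHom.IsQuasiIso (μ : DGLAHom L M) : Prop :=
  (∀ w, M.d w = 0 → ∃ v u, L.d v = 0 ∧ w = μ.f v + M.d u) ∧
  (∀ v, L.d v = 0 → (∃ u, μ.f v = M.d u) → ∃ z, v = L.d z)

/-- `α` is a Maurer–Cartan element of `L`. -/
def DGLA.IsMaurerCartan (α : ℕ → L.V) : Prop :=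
  α 0 = 0 ∧ (∀ n, α n ∈ L.G 1) ∧
    ∀ n, L.d (α n)
      + (2 : K)⁻¹ • ∑ p ∈ Finset.HasAntidiagonal.antidiagonal n, L.br (α p.1) (α p.2) = 0

/-- The twisted differential `∂ + [α,−]` of `L^α` on `L[[ℏ]]`. -/
def DGLA.twistedD (α : ℕ → L.V) (a : ℕ → L.V) : ℕ → L.V :=
  fun n => L.d (a n) + ∑ p ∈ Finset.HasAntidiagonal.antidiagonal n, L.br (α p.1) (a p.2)

open Finset in
theorem DGLA.dD_add_TD (N : DGLA K) (γ : ℕ → N.V)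
    (hγ1 : ∀ n, γ n ∈ N.G 1)
    (hmc : ∀ n, N.d (γ n) + (2:K)⁻¹ • ∑ p ∈ antidiagonal n, N.br (γ p.1) (γ p.2) = 0)
    (a : ℕ → N.V) (n : ℕ) :
    N.d (N.twistedD γ a n)
      + ∑ p ∈ antidiagonal n, N.br (γ p.1) (N.twistedD γ a p.2) = 0 := by
  have negone : ((Int.negOnePow 1 : ℤˣ) : ℤ) = -1 := by
    rw [Int.negOnePow_one]; rfl
  have hleib : ∀ (p : ℕ) (x : N.V),
      N.d (N.br (γ p) x) = N.br (N.d (γ p)) x - N.br (γ p) (N.d x) := by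
    intro p x
    rw [N.leibniz 1 (γ p) (hγ1 p) x, negone, neg_one_zsmul, ← sub_eq_add_neg]
  simp only [DGLA.twistedD]
  rw [map_add, N.d_sq, zero_add, map_sum]
  have e1 : ∑ p ∈ antidiagonal n, N.d (N.br (γ p.1) (a p.2))
      = ∑ p ∈ antidiagonal n, N.br (N.d (γ p.1)) (a p.2)
        - ∑ p ∈ antidiagonal n, N.br (γ p.1) (N.d (a p.2)) := by
    rw [← Finset.sum_sub_distrib]
    exact Finset.sum_congr rfl fun (p : ℕ × ℕ) _ => hleib p.1 (a p.2)
  have e2 : ∑ p ∈ antidiagonal n, N.br (γ p.1)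
          (N.d (a p.2) + ∑ rs ∈ antidiagonal p.2, N.br (γ rs.1) (a rs.2))
      = ∑ p ∈ antidiagonal n, N.br (γ p.1) (N.d (a p.2))
        + ∑ p ∈ antidiagonal n, ∑ rs ∈ antidiagonal p.2,
            N.br (γ p.1) (N.br (γ rs.1) (a rs.2)) := by
    rw [← Finset.sum_add_distrib]
    refine Finset.sum_congr rfl fun (p : ℕ × ℕ) _ => ?_
    rw [map_add, map_sum]
  rw [e1, e2]
  calc (∑ p ∈ antidiagonal n, N.br (N.d (γ p.1)) (a p.2)
          - ∑ p ∈ antidiagonal n, N.br (γ p.1) (N.d (a p.2)))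
        + (∑ p ∈ antidiagonal n, N.br (γ p.1) (N.d (a p.2))
          + ∑ p ∈ antidiagonal n, ∑ rs ∈ antidiagonal p.2,
              N.br (γ p.1) (N.br (γ rs.1) (a rs.2)))
     = ∑ p ∈ antidiagonal n, N.br (N.d (γ p.1)) (a p.2)
        + ∑ p ∈ antidiagonal n, ∑ rs ∈ antidiagonal p.2,
            N.br (γ p.1) (N.br (γ rs.1) (a rs.2)) := by abel
    _ = 0 := by
        have hdγ : ∀ p, N.d (γ p)
            = -((2:K)⁻¹ • ∑ rs ∈ antidiagonal p, N.br (γ rs.1) (γ rs.2)) :=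
          fun p => eq_neg_of_add_eq_zero_left (hmc p)
        have h1 : ∑ p ∈ antidiagonal n, N.br (N.d (γ p.1)) (a p.2)
            = -((2:K)⁻¹ • ∑ pq ∈ antidiagonal n, ∑ rs ∈ antidiagonal pq.1,
                N.br (N.br (γ rs.1) (γ rs.2)) (a pq.2)) := by
          rw [← neg_eq_iff_eq_neg, ← Finset.sum_neg_distrib, Finset.smul_sum]
          refine Finset.sum_congr rfl fun p _ => ?_
          rw [hdγ p.1, map_neg, map_smul, map_sum, LinearMap.neg_apply,
            LinearMap.smul_apply, LinearMap.sum_apply, neg_neg, Finset.smul_sum]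
        have h2 : ∑ pq ∈ antidiagonal n, ∑ rs ∈ antidiagonal pq.2,
              N.br (γ pq.1) (N.br (γ rs.1) (a rs.2))
            = (2:K)⁻¹ • ∑ pq ∈ antidiagonal n, ∑ rs ∈ antidiagonal pq.1,
                N.br (N.br (γ rs.1) (γ rs.2)) (a pq.2) := by
          have hsw := triple_comm' (fun p r s => N.br (γ p) (N.br (γ r) (a s))) n
          have h2S : (2:K) • (∑ pq ∈ antidiagonal n, ∑ rs ∈ antidiagonal pq.2,
                N.br (γ pq.1) (N.br (γ rs.1) (a rs.2)))
              = ∑ pq ∈ antidiagonal n, ∑ rs ∈ antidiagonal pq.2,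
                  N.br (N.br (γ pq.1) (γ rs.1)) (a rs.2) := by
            rw [two_smul]
            nth_rewrite 2 [hsw]
            rw [← Finset.sum_add_distrib]
            refine Finset.sum_congr rfl fun pq _ => ?_
            rw [← Finset.sum_add_distrib]
            refine Finset.sum_congr rfl fun rs _ => ?_
            have hj := N.jacobi 1 1 (γ pq.1) (hγ1 pq.1) (γ rs.1) (hγ1 rs.1) (a rs.2)
            have hno : ((Int.negOnePow (1 * 1) : ℤˣ) : ℤ) = -1 := by norm_num [negone]
            rw [hno, neg_one_zsmul] at hj
            rw [hj]; abel
          have hfin := congrArg (fun x => (2:K)⁻¹ • x) h2S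
          simp only [inv_smul_smul₀ (two_ne_zero (α := K))] at hfin
          rw [hfin, triple_rot' (fun p r s => N.br (N.br (γ p) (γ r)) (a s)) n]
        rw [h1, h2, neg_add_cancel]

open Finset in
theorem DGLA.d_T (N : DGLA K) (γ : ℕ → N.V)
    (hγ1 : ∀ n, γ n ∈ N.G 1)
    (hmc : ∀ n, N.d (γ n) + (2:K)⁻¹ • ∑ p ∈ antidiagonal n, N.br (γ p.1) (γ p.2) = 0)
    (a : ℕ → N.V) (n : ℕ) :
    N.d (∑ p ∈ antidiagonal n, N.br (γ p.1) (a p.2))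
      = - ∑ p ∈ antidiagonal n, N.br (γ p.1) (N.twistedD γ a p.2) := by
  have h := N.dD_add_TD γ hγ1 hmc a n
  have h2 : N.d (N.twistedD γ a n)
      = N.d (∑ p ∈ antidiagonal n, N.br (γ p.1) (a p.2)) := by
    show N.d (N.d (a n) + _) = _
    rw [map_add, N.d_sq, zero_add]
  rw [h2] at h
  exact eq_neg_of_add_eq_zero_left h

/-- Twisting a quasi-isomorphism `μ : L → L̃` by a Maurer–Cartan element `α`
yields a quasi-isomorphism `μ^α : L^α → L̃^{μ(α)}`: the coefficientwise
extension of `μ` induces a bijection on the cohomology of the twisted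
differentials `∂ + [α,−]` and `∂̃ + [μ(α),−]`. -/
theorem DGLAHom.twisted_isQuasiIso (μ : DGLAHom L M) (hμ : μ.IsQuasiIso L M)
    (α : ℕ → L.V) (hα : L.IsMaurerCartan (K := K) α) :
    (∀ w : ℕ → M.V, M.twistedD (fun n => μ.f (α n)) w = 0 →
        ∃ (v : ℕ → L.V) (u : ℕ → M.V), L.twistedD α v = 0 ∧
          w = (fun n => μ.f (v n)) + M.twistedD (fun n => μ.f (α n)) u) ∧
    (∀ v : ℕ → L.V, L.twistedD α v = 0 →
        (∃ u : ℕ → M.V, (fun n => μ.f (v n)) = M.twistedD (fun n => μ.f (α n)) u) →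
          ∃ z : ℕ → L.V, v = L.twistedD α z) := by
  classical
  obtain ⟨hα0, hα1, hαmc⟩ := hα
  set β : ℕ → M.V := fun n => μ.f (α n) with hβdef
  have hβ0 : β 0 = 0 := by simp [hβdef, hα0]
  have hβ1 : ∀ n, β n ∈ M.G 1 := fun n => μ.grade 1 (α n) (hα1 n)
  have hβmc : ∀ n, M.d (β n)
      + (2:K)⁻¹ • ∑ p ∈ Finset.HasAntidiagonal.antidiagonal n, M.br (β p.1) (β p.2) = 0 := by
    intro n
    have h := congrArg μ.f (hαmc n)
    rw [map_add, map_smul, map_sum, map_zero, μ.comm_d] at h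
    simp only [μ.comm_br] at h
    exact h
  constructor
  · -- surjectivity on twisted cohomology
    intro w hw
    have hwn : ∀ n, M.d (w n)
        = - ∑ p ∈ Finset.HasAntidiagonal.antidiagonal n, M.br (β p.1) (w p.2) := by
      intro n
      have h := congrFun hw n
      simp only [DGLA.twistedD, Pi.zero_apply] at h
      exact eq_neg_of_add_eq_zero_left h
    set Good : ℕ → (ℕ → L.V × M.V) → Prop := fun n s =>
      L.d (s n).1 + ∑ p ∈ Finset.HasAntidiagonal.antidiagonal n, L.br (α p.1) ((s p.2).1) = 0 ∧
      w n = μ.f (s n).1 + M.d (s n).2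
        + ∑ p ∈ Finset.HasAntidiagonal.antidiagonal n, M.br (β p.1) ((s p.2).2) with hGood
    have hdep : ∀ n (s t : ℕ → L.V × M.V), (∀ k ≤ n, s k = t k) →
        Good n s → Good n t := by
      intro n s t hst h
      obtain ⟨h1, h2⟩ := h
      have hs1 : ∀ p ∈ Finset.HasAntidiagonal.antidiagonal n,
          L.br (α p.1) ((t p.2).1) = L.br (α p.1) ((s p.2).1) := by
        intro p hp
        have := Finset.HasAntidiagonal.mem_antidiagonal.mp hp
        rw [hst p.2 (by omega)]
      have hs2 : ∀ p ∈ Finset.HasAntidiagonal.antidiagonal n,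
          M.br (β p.1) ((t p.2).2) = M.br (β p.1) ((s p.2).2) := by
        intro p hp
        have := Finset.HasAntidiagonal.mem_antidiagonal.mp hp
        rw [hst p.2 (by omega)]
      constructor
      · rw [Finset.sum_congr rfl hs1, ← hst n le_rfl]; exact h1
      · rw [Finset.sum_congr rfl hs2, ← hst n le_rfl]; exact h2
    have hstep : ∀ n (s : ℕ → L.V × M.V), (∀ k < n, Good k s) →
        ∃ x, Good n (Function.update s n x) := by
      intro n s hs
      set v : ℕ → L.V := fun k => (s k).1 with hvdef
      set u : ℕ → M.V := fun k => (s k).2 with hudef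
      have hv : ∀ k < n, L.twistedD α v k = 0 := fun k hk => (hs k hk).1
      have hu : ∀ k < n, w k = μ.f (v k) + M.d (u k)
          + ∑ p ∈ Finset.HasAntidiagonal.antidiagonal k, M.br (β p.1) (u p.2) :=
        fun k hk => (hs k hk).2
      have hdo : L.d (∑ p ∈ Finset.HasAntidiagonal.antidiagonal n, L.br (α p.1) (v p.2)) = 0 := by
        rw [L.d_T α hα1 hαmc v n, neg_eq_zero]
        refine Finset.sum_eq_zero fun (p : ℕ × ℕ) hp => ?_
        have hpn := Finset.HasAntidiagonal.mem_antidiagonal.mp hp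
        rcases Nat.lt_or_ge p.2 n with hlt | hge
        · rw [hv p.2 hlt, map_zero]
        · have h0 : p.1 = 0 := by omega
          rw [h0, hα0]; simp
      have hdc : M.d (w n - ∑ p ∈ Finset.HasAntidiagonal.antidiagonal n, M.br (β p.1) (u p.2))
          = μ.f (- ∑ p ∈ Finset.HasAntidiagonal.antidiagonal n, L.br (α p.1) (v p.2)) := by
        rw [map_sub, hwn n, M.d_T β hβ1 hβmc u n, sub_neg_eq_add, neg_add_eq_sub,
          ← Finset.sum_sub_distrib, map_neg, map_sum, ← Finset.sum_neg_distrib]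
        refine Finset.sum_congr rfl fun (p : ℕ × ℕ) hp => ?_
        have hpn := Finset.HasAntidiagonal.mem_antidiagonal.mp hp
        rcases Nat.lt_or_ge p.2 n with hlt | hge
        · have hw2 : w p.2 = μ.f (v p.2) + M.twistedD β u p.2 := by
            rw [hu p.2 hlt, add_assoc]; rfl
          rw [μ.comm_br, hw2, ← map_sub]
          have hsub : M.twistedD β u p.2 - (μ.f (v p.2) + M.twistedD β u p.2)
              = -(μ.f (v p.2)) := by abel
          rw [hsub, map_neg]
        · have h0 : p.1 = 0 := by omega
          rw [h0, hβ0, hα0]; simp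
      obtain ⟨z, hz⟩ := hμ.2 (- ∑ p ∈ Finset.HasAntidiagonal.antidiagonal n, L.br (α p.1) (v p.2))
        (by rw [map_neg, hdo, neg_zero])
        ⟨w n - ∑ p ∈ Finset.HasAntidiagonal.antidiagonal n, M.br (β p.1) (u p.2), hdc.symm⟩
      have hdcz : M.d (w n - ∑ p ∈ Finset.HasAntidiagonal.antidiagonal n, M.br (β p.1) (u p.2)
          - μ.f z) = 0 := by
        rw [map_sub, hdc, ← μ.comm_d, ← hz, sub_self]
      obtain ⟨v', u', hv'0, hcz⟩ := hμ.1 _ hdcz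
      have hsum1 : ∀ x : L.V × M.V,
          ∑ p ∈ Finset.HasAntidiagonal.antidiagonal n, L.br (α p.1) ((Function.update s n x p.2).1)
            = ∑ p ∈ Finset.HasAntidiagonal.antidiagonal n, L.br (α p.1) (v p.2) := by
        intro x
        refine Finset.sum_congr rfl fun (p : ℕ × ℕ) hp => ?_
        have hpn := Finset.HasAntidiagonal.mem_antidiagonal.mp hp
        rcases Nat.lt_or_ge p.2 n with hlt | hge
        · rw [Function.update_of_ne (by omega)]
        · have h0 : p.1 = 0 := by omega
          rw [h0, hα0]; simp
      have hsum2 : ∀ x : L.V × M.V,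
          ∑ p ∈ Finset.HasAntidiagonal.antidiagonal n, M.br (β p.1) ((Function.update s n x p.2).2)
            = ∑ p ∈ Finset.HasAntidiagonal.antidiagonal n, M.br (β p.1) (u p.2) := by
        intro x
        refine Finset.sum_congr rfl fun (p : ℕ × ℕ) hp => ?_
        have hpn := Finset.HasAntidiagonal.mem_antidiagonal.mp hp
        rcases Nat.lt_or_ge p.2 n with hlt | hge
        · rw [Function.update_of_ne (by omega)]
        · have h0 : p.1 = 0 := by omega
          rw [h0, hβ0]; simp
      refine ⟨(z + v', u'), ?_, ?_⟩
      · rw [Function.update_self, hsum1 (z + v', u')]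
        show L.d (z + v') + _ = _
        rw [map_add, hv'0, add_zero, ← hz, neg_add_cancel]
      · rw [Function.update_self, hsum2 (z + v', u')]
        show w n = μ.f (z + v') + M.d u' + _
        rw [map_add]
        calc w n
            = (w n - ∑ p ∈ Finset.HasAntidiagonal.antidiagonal n, M.br (β p.1) (u p.2) - μ.f z)
              + μ.f z + ∑ p ∈ Finset.HasAntidiagonal.antidiagonal n, M.br (β p.1) (u p.2) := by abel
          _ = (μ.f v' + M.d u') + μ.f z
              + ∑ p ∈ Finset.HasAntidiagonal.antidiagonal n, M.br (β p.1) (u p.2) := by rw [hcz]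
          _ = μ.f z + μ.f v' + M.d u'
              + ∑ p ∈ Finset.HasAntidiagonal.antidiagonal n, M.br (β p.1) (u p.2) := by abel
    obtain ⟨g, hg⟩ := exists_good_seq ((0 : L.V), (0 : M.V)) Good hdep hstep
    refine ⟨fun n => (g n).1, fun n => (g n).2, ?_, ?_⟩
    · funext n
      exact (hg n).1
    · funext n
      show w n = μ.f ((g n).1) + (M.d ((g n).2)
        + ∑ p ∈ Finset.HasAntidiagonal.antidiagonal n, M.br (β p.1) ((g p.2).2))
      rw [← add_assoc]
      exact (hg n).2
  · -- injectivity on twisted cohomology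
    rintro v hv ⟨u, hvu⟩
    have hvn : ∀ n, L.d (v n)
        = - ∑ p ∈ Finset.HasAntidiagonal.antidiagonal n, L.br (α p.1) (v p.2) := by
      intro n
      have h := congrFun hv n
      simp only [DGLA.twistedD, Pi.zero_apply] at h
      exact eq_neg_of_add_eq_zero_left h
    have hun : ∀ n, μ.f (v n) = M.d (u n)
        + ∑ p ∈ Finset.HasAntidiagonal.antidiagonal n, M.br (β p.1) (u p.2) :=
      fun n => congrFun hvu n
    set Good : ℕ → (ℕ → L.V × M.V) → Prop := fun n s =>
      L.d (s n).1 + ∑ p ∈ Finset.HasAntidiagonal.antidiagonal n, L.br (α p.1) ((s p.2).1) = v n ∧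
      μ.f (s n).1 = u n + M.d (s n).2
        + ∑ p ∈ Finset.HasAntidiagonal.antidiagonal n, M.br (β p.1) ((s p.2).2) with hGood
    have hdep : ∀ n (s t : ℕ → L.V × M.V), (∀ k ≤ n, s k = t k) →
        Good n s → Good n t := by
      intro n s t hst h
      obtain ⟨h1, h2⟩ := h
      have hs1 : ∀ p ∈ Finset.HasAntidiagonal.antidiagonal n,
          L.br (α p.1) ((t p.2).1) = L.br (α p.1) ((s p.2).1) := by
        intro p hp
        have := Finset.HasAntidiagonal.mem_antidiagonal.mp hp
        rw [hst p.2 (by omega)]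
      have hs2 : ∀ p ∈ Finset.HasAntidiagonal.antidiagonal n,
          M.br (β p.1) ((t p.2).2) = M.br (β p.1) ((s p.2).2) := by
        intro p hp
        have := Finset.HasAntidiagonal.mem_antidiagonal.mp hp
        rw [hst p.2 (by omega)]
      constructor
      · rw [Finset.sum_congr rfl hs1, ← hst n le_rfl]; exact h1
      · rw [Finset.sum_congr rfl hs2, ← hst n le_rfl]; exact h2
    have hstep : ∀ n (s : ℕ → L.V × M.V), (∀ k < n, Good k s) →
        ∃ x, Good n (Function.update s n x) := by
      intro n s hs
      set z : ℕ → L.V := fun k => (s k).1 with hzdef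
      set u' : ℕ → M.V := fun k => (s k).2 with hu'def
      have hz : ∀ k < n, L.twistedD α z k = v k := fun k hk => (hs k hk).1
      have hu' : ∀ k < n, μ.f (z k) = u k + M.d (u' k)
          + ∑ p ∈ Finset.HasAntidiagonal.antidiagonal k, M.br (β p.1) (u' p.2) :=
        fun k hk => (hs k hk).2
      have hde : L.d (v n - ∑ p ∈ Finset.HasAntidiagonal.antidiagonal n, L.br (α p.1) (z p.2)) = 0 := by
        rw [map_sub, hvn n, L.d_T α hα1 hαmc z n, sub_neg_eq_add,
          neg_add_eq_sub]
        rw [sub_eq_zero]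
        refine Finset.sum_congr rfl fun (p : ℕ × ℕ) hp => ?_
        have hpn := Finset.HasAntidiagonal.mem_antidiagonal.mp hp
        rcases Nat.lt_or_ge p.2 n with hlt | hge
        · rw [hz p.2 hlt]
        · have h0 : p.1 = 0 := by omega
          rw [h0, hα0]; simp
      have hμe : μ.f (v n - ∑ p ∈ Finset.HasAntidiagonal.antidiagonal n, L.br (α p.1) (z p.2))
          = M.d (u n + ∑ p ∈ Finset.HasAntidiagonal.antidiagonal n, M.br (β p.1) (u' p.2)) := by
        rw [map_sub, map_sum, hun n, map_add, M.d_T β hβ1 hβmc u' n, add_sub_assoc]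
        refine congrArg (fun t => M.d (u n) + t) ?_
        rw [← Finset.sum_sub_distrib, ← Finset.sum_neg_distrib]
        refine Finset.sum_congr rfl fun (p : ℕ × ℕ) hp => ?_
        have hpn := Finset.HasAntidiagonal.mem_antidiagonal.mp hp
        rcases Nat.lt_or_ge p.2 n with hlt | hge
        · have hz2 : μ.f (z p.2) = u p.2 + M.twistedD β u' p.2 := by
            rw [hu' p.2 hlt, add_assoc]; rfl
          rw [μ.comm_br, hz2, map_add]
          abel
        · have h0 : p.1 = 0 := by omega
          rw [h0, hβ0, hα0]; simp
      obtain ⟨z', hz'⟩ := hμ.2 _ hde ⟨_, hμe⟩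
      have hdw' : M.d (μ.f z' - u n
          - ∑ p ∈ Finset.HasAntidiagonal.antidiagonal n, M.br (β p.1) (u' p.2)) = 0 := by
        rw [map_sub, map_sub, ← μ.comm_d, ← hz', hμe, map_add]
        abel
      obtain ⟨v0, u0, hv00, hw'⟩ := hμ.1 _ hdw'
      have hsum1 : ∀ x : L.V × M.V,
          ∑ p ∈ Finset.HasAntidiagonal.antidiagonal n, L.br (α p.1) ((Function.update s n x p.2).1)
            = ∑ p ∈ Finset.HasAntidiagonal.antidiagonal n, L.br (α p.1) (z p.2) := by
        intro x
        refine Finset.sum_congr rfl fun (p : ℕ × ℕ) hp => ?_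
        have hpn := Finset.HasAntidiagonal.mem_antidiagonal.mp hp
        rcases Nat.lt_or_ge p.2 n with hlt | hge
        · rw [Function.update_of_ne (by omega)]
        · have h0 : p.1 = 0 := by omega
          rw [h0, hα0]; simp
      have hsum2 : ∀ x : L.V × M.V,
          ∑ p ∈ Finset.HasAntidiagonal.antidiagonal n, M.br (β p.1) ((Function.update s n x p.2).2)
            = ∑ p ∈ Finset.HasAntidiagonal.antidiagonal n, M.br (β p.1) (u' p.2) := by
        intro x
        refine Finset.sum_congr rfl fun (p : ℕ × ℕ) hp => ?_
        have hpn := Finset.HasAntidiagonal.mem_antidiagonal.mp hp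
        rcases Nat.lt_or_ge p.2 n with hlt | hge
        · rw [Function.update_of_ne (by omega)]
        · have h0 : p.1 = 0 := by omega
          rw [h0, hβ0]; simp
      refine ⟨(z' - v0, u0), ?_, ?_⟩
      · rw [Function.update_self, hsum1 (z' - v0, u0)]
        show L.d (z' - v0) + _ = _
        rw [map_sub, hv00, sub_zero, ← hz']
        abel
      · rw [Function.update_self, hsum2 (z' - v0, u0)]
        show μ.f (z' - v0) = u n + M.d u0 + _
        rw [map_sub]
        calc μ.f z' - μ.f v0
            = (μ.f z' - u n - ∑ p ∈ Finset.HasAntidiagonal.antidiagonal n, M.br (β p.1) (u' p.2))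
              + u n + ∑ p ∈ Finset.HasAntidiagonal.antidiagonal n, M.br (β p.1) (u' p.2)
              - μ.f v0 := by abel
          _ = (μ.f v0 + M.d u0) + u n
              + ∑ p ∈ Finset.HasAntidiagonal.antidiagonal n, M.br (β p.1) (u' p.2) - μ.f v0 := by
              rw [hw']
          _ = u n + M.d u0
              + ∑ p ∈ Finset.HasAntidiagonal.antidiagonal n, M.br (β p.1) (u' p.2) := by abel
    obtain ⟨g, hg⟩ := exists_good_seq ((0 : L.V), (0 : M.V)) Good hdep hstep
    refine ⟨fun n => (g n).1, ?_⟩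
    funext n
    exact ((hg n).1).symm


end
end

section
/- Let A = K[x,y] over a field K of characteristic zero, with canonical Poisson bracket {a,b} = ∂_x a ∂_y b − ∂_y a ∂_x b descending to the Lie algebra A/K, and let V be the Vey cocycle V(a,b) = (1/24)(∂_x³a ∂_y³b − 3∂_x²∂_y a ∂_x∂_y²b + 3∂_x∂_y²a ∂_x²∂_y b − ∂_y³a ∂_x³b). Then V is a nontrivial 2-cocycle on A/K: there is no linear map P: A/K → A/K with V(a,b) = P({a,b}) − {P(a),b} − {a,P(b)} for all a,b ∈ A/K. -/
/-!
STATEMENT 8: Over `A = K[x,y]`, char `K = 0`, the Vey cocycle `V` is a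
*nontrivial* 2-cocycle on the Lie algebra `A/K` (identified with polynomials
vanishing at the origin, with the bracket and cocycle reduced modulo
constants): there is no linear map `P : A/K → A/K` with
`V(a,b) = P({a,b}) − {P(a),b} − {a,P(b)}` for all `a, b ∈ A/K`. -/

open MvPolynomial

variable (K : Type) [Field K] [CharZero K]

noncomputable abbrev dX (p : MvPolynomial (Fin 2) K) : MvPolynomial (Fin 2) K :=
  pderiv (0 : Fin 2) p

noncomputable abbrev dY (p : MvPolynomial (Fin 2) K) : MvPolynomial (Fin 2) K :=
  pderiv (1 : Fin 2) p

/-- The canonical Poisson bracket `{a,b} = ∂_x a ∂_y b − ∂_y a ∂_x b`. -/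
noncomputable def pbr (a b : MvPolynomial (Fin 2) K) : MvPolynomial (Fin 2) K :=
  dX K a * dY K b - dY K a * dX K b

/-- The Vey cocycle. -/
noncomputable def veyV (a b : MvPolynomial (Fin 2) K) : MvPolynomial (Fin 2) K :=
  (24 : K)⁻¹ • (dX K (dX K (dX K a)) * dY K (dY K (dY K b))
    - 3 * (dY K (dX K (dX K a)) * dY K (dY K (dX K b)))
    + 3 * (dY K (dY K (dX K a)) * dY K (dX K (dX K b)))
    - dY K (dY K (dY K a)) * dX K (dX K (dX K b)))

/-- The model for `A/K`: the subspace of polynomials vanishing at the origin. -/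
noncomputable def Snoconst : Submodule K (MvPolynomial (Fin 2) K) where
  carrier := {p | constantCoeff p = 0}
  add_mem' := by intro a b ha hb; simp only [Set.mem_setOf_eq, map_add] at *
                 rw [ha, hb, add_zero]
  zero_mem' := by simp
  smul_mem' := by intro c x hx; simp only [Set.mem_setOf_eq] at *
                  rw [MvPolynomial.smul_eq_C_mul, map_mul, hx, mul_zero]

/-- Reduction modulo constants, landing in the model of `A/K`. -/
noncomputable def redK (p : MvPolynomial (Fin 2) K) : Snoconst K :=
  ⟨p - C (constantCoeff p), by
    have : constantCoeff (p - C (constantCoeff p)) = 0 := by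
      simp [map_sub]
    exact this⟩

section VeyAux
set_option linter.unusedSectionVars false
set_option linter.unusedVariables false


lemma vey_pderiv_ofNat (i : Fin 2) (n : ℕ) [n.AtLeastTwo] :
    pderiv i (no_index (OfNat.ofNat n) : MvPolynomial (Fin 2) K) = 0 := by
  rw [(Nat.cast_ofNat (R := MvPolynomial (Fin 2) K) (n := n)).symm]
  exact (pderiv i).map_natCast _

/-- the coefficient-extraction exponent `xy`. -/
noncomputable def veyμ : Fin 2 →₀ ℕ := Finsupp.single 0 1 + Finsupp.single 1 1

lemma veyμ_ne : veyμ ≠ 0 := by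
  intro h
  have := DFunLike.congr_fun h (0 : Fin 2)
  simp [veyμ, Finsupp.single_apply] at this

lemma vey_mem_Snoconst (p : MvPolynomial (Fin 2) K) (h : constantCoeff p = 0) :
    p ∈ Snoconst K := h

lemma vey_coeff_redK (p : MvPolynomial (Fin 2) K) :
    coeff veyμ ((redK K p : Snoconst K) : MvPolynomial (Fin 2) K) = coeff veyμ p := by
  show coeff veyμ (p - C (constantCoeff p)) = coeff veyμ p
  rw [coeff_sub, coeff_C, if_neg (by simpa using veyμ_ne.symm ∘ Eq.symm ∘ Eq.symm)]
  · ring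
  

lemma vey_coeff_mul_mon (q : MvPolynomial (Fin 2) K) (d : Fin 2 →₀ ℕ) (c : K)
    (h : ¬ d ≤ veyμ) : coeff veyμ (q * monomial d c) = 0 := by
  rw [coeff_mul_monomial', if_neg h]

lemma vey_coeff_mon_mul (q : MvPolynomial (Fin 2) K) (d : Fin 2 →₀ ℕ) (c : K)
    (h : ¬ d ≤ veyμ) : coeff veyμ (monomial d c * q) = 0 := by
  rw [coeff_monomial_mul', if_neg h]

lemma vey_not_le (a b : ℕ) (h : 2 ≤ a + b) (hb : b ≤ 1 → 2 ≤ a) :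
    ¬ (Finsupp.single 0 a + Finsupp.single 1 b : Fin 2 →₀ ℕ) ≤ veyμ := by
  intro hle
  have h0 := Finsupp.le_def.mp hle 0
  have h1 := Finsupp.le_def.mp hle 1
  simp [veyμ, Finsupp.single_apply] at h0 h1
  omega

---- explicit monomial forms ----

lemma monX01 : (X 0 * X 1 : MvPolynomial (Fin 2) K) = monomial veyμ 1 := by
  rw [← pow_one (X 0 : MvPolynomial (Fin 2) K), ← pow_one (X 1 : MvPolynomial (Fin 2) K),
    X_pow_eq_monomial, X_pow_eq_monomial, monomial_mul, one_mul]
  rfl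

lemma mon_a1 : (X 0 ^ 3 * X 1 : MvPolynomial (Fin 2) K)
    = monomial (Finsupp.single 0 3 + Finsupp.single 1 1) 1 := by
  rw [← pow_one (X 1 : MvPolynomial (Fin 2) K), X_pow_eq_monomial, X_pow_eq_monomial,
    monomial_mul, one_mul]

lemma mon_b1 : (X 0 * X 1 ^ 3 : MvPolynomial (Fin 2) K)
    = monomial (Finsupp.single 0 1 + Finsupp.single 1 3) 1 := by
  rw [← pow_one (X 0 : MvPolynomial (Fin 2) K), X_pow_eq_monomial, X_pow_eq_monomial,
    monomial_mul, one_mul]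

lemma mon_a2 : (X 0 ^ 4 : MvPolynomial (Fin 2) K)
    = monomial (Finsupp.single 0 4 + Finsupp.single 1 0) 1 := by
  rw [X_pow_eq_monomial]; congr 1; simp

lemma mon_b2 : (X 1 ^ 4 : MvPolynomial (Fin 2) K)
    = monomial (Finsupp.single 0 0 + Finsupp.single 1 4) 1 := by
  rw [X_pow_eq_monomial]; congr 1; simp

/-- derivative of a monomial, cleaned up. -/
lemma vey_pderiv_mon (i : Fin 2) (a b : ℕ) (c : K) (a' b' : ℕ) (k : ℕ)
    (hsub : (Finsupp.single 0 a + Finsupp.single 1 b : Fin 2 →₀ ℕ) - Finsupp.single i 1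
      = Finsupp.single 0 a' + Finsupp.single 1 b')
    (hk : (Finsupp.single 0 a + Finsupp.single 1 b : Fin 2 →₀ ℕ) i = k) :
    pderiv i (monomial (Finsupp.single 0 a + Finsupp.single 1 b) c)
      = monomial (Finsupp.single 0 a' + Finsupp.single 1 b') (c * k) := by
  rw [pderiv_monomial, hsub, hk]


end VeyAux

set_option linter.unusedVariables false in
/-- Nontriviality of the Vey cocycle on `A/K`: no linear map
`P : A/K → A/K` satisfies `V(a,b) = P({a,b}) − {P(a),b} − {a,P(b)}`
(all brackets and values taken modulo constants). -/
theorem veyV_nontrivial :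
    ¬ ∃ P : Snoconst K →ₗ[K] Snoconst K,
        ∀ a b : Snoconst K,
          redK K (veyV K a.val b.val)
            = P (redK K (pbr K a.val b.val))
              - redK K (pbr K (P a).val b.val)
              - redK K (pbr K a.val (P b).val) := by
  rintro ⟨P, hP⟩
  -- elements of Snoconst
  set A1 : Snoconst K := ⟨X 0 ^ 3 * X 1, vey_mem_Snoconst K _ (by simp)⟩ with hA1
  set B1 : Snoconst K := ⟨X 0 * X 1 ^ 3, vey_mem_Snoconst K _ (by simp)⟩ with hB1
  set A2 : Snoconst K := ⟨X 0 ^ 4, vey_mem_Snoconst K _ (by simp)⟩ with hA2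
  set B2 : Snoconst K := ⟨X 1 ^ 4, vey_mem_Snoconst K _ (by simp)⟩ with hB2
  set U : Snoconst K := ⟨X 0 ^ 3 * X 1 ^ 3, vey_mem_Snoconst K _ (by simp)⟩ with hU
  set c : K := coeff veyμ ((P U : Snoconst K) : MvPolynomial (Fin 2) K) with hc
  -- Vey values
  have hV1 : veyV K (A1 : MvPolynomial (Fin 2) K) (B1 : MvPolynomial (Fin 2) K)
      = (-3 : K) • (X 0 * X 1) := by
    rw [hA1, veyV]
    have : (dX K (dX K (dX K (X 0^3 * X 1))) * dY K (dY K (dY K (X 0 * X 1^3)))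
      - 3 * (dY K (dX K (dX K (X 0^3 * X 1))) * dY K (dY K (dX K (X 0 * X 1^3))))
      + 3 * (dY K (dY K (dX K (X 0^3 * X 1))) * dY K (dX K (dX K (X 0 * X 1^3))))
      - dY K (dY K (dY K (X 0^3 * X 1))) * dX K (dX K (dX K (X 0 * X 1^3))))
        = (-72 : K) • (X 0 * X 1 : MvPolynomial (Fin 2) K) := by
      simp [pderiv_mul, pderiv_pow, pderiv_X_self, pderiv_X_of_ne, vey_pderiv_ofNat,
        smul_eq_C_mul, map_neg, map_ofNat]
      ring
    rw [this, smul_smul]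
    norm_num
  have hV2 : veyV K (A2 : MvPolynomial (Fin 2) K) (B2 : MvPolynomial (Fin 2) K)
      = (24 : K) • (X 0 * X 1) := by
    rw [hA2, veyV]
    have : (dX K (dX K (dX K (X 0^4 : MvPolynomial (Fin 2) K))) * dY K (dY K (dY K (X 1^4)))
      - 3 * (dY K (dX K (dX K (X 0^4))) * dY K (dY K (dX K (X 1^4))))
      + 3 * (dY K (dY K (dX K (X 0^4))) * dY K (dX K (dX K (X 1^4))))
      - dY K (dY K (dY K (X 0^4))) * dX K (dX K (dX K (X 1^4))))
        = (576 : K) • (X 0 * X 1 : MvPolynomial (Fin 2) K) := by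
      simp [pderiv_mul, pderiv_pow, pderiv_X_self, pderiv_X_of_ne, vey_pderiv_ofNat,
        smul_eq_C_mul, map_neg, map_ofNat]
      ring
    rw [this, smul_smul]
    norm_num
  -- bracket values
  have hbr1 : pbr K (A1 : MvPolynomial (Fin 2) K) (B1 : MvPolynomial (Fin 2) K)
      = (8 : K) • (X 0 ^ 3 * X 1 ^ 3) := by
    rw [hA1]
    show pbr K (X 0^3 * X 1) (X 0 * X 1^3) = _
    simp [pbr, pderiv_mul, pderiv_pow, pderiv_X_self, pderiv_X_of_ne, vey_pderiv_ofNat,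
      smul_eq_C_mul, map_ofNat]
    ring
  have hbr2 : pbr K (A2 : MvPolynomial (Fin 2) K) (B2 : MvPolynomial (Fin 2) K)
      = (16 : K) • (X 0 ^ 3 * X 1 ^ 3) := by
    rw [hA2]
    show pbr K (X 0^4) (X 1^4) = _
    simp [pbr, pderiv_mul, pderiv_pow, pderiv_X_self, pderiv_X_of_ne, vey_pderiv_ofNat,
      smul_eq_C_mul, map_ofNat]
    ring
  -- redK of brackets
  have hred1 : redK K (pbr K (A1 : MvPolynomial (Fin 2) K) (B1 : MvPolynomial (Fin 2) K))
      = (8 : K) • U := by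
    apply Subtype.ext
    show pbr K _ _ - C (constantCoeff (pbr K _ _)) = _
    rw [hbr1]
    simp [hU, smul_eq_C_mul]
  have hred2 : redK K (pbr K (A2 : MvPolynomial (Fin 2) K) (B2 : MvPolynomial (Fin 2) K))
      = (16 : K) • U := by
    apply Subtype.ext
    show pbr K _ _ - C (constantCoeff (pbr K _ _)) = _
    rw [hbr2]
    simp [hU, smul_eq_C_mul]
  -- vanishing of the unknown bracket terms
  have van_r1 : ∀ q : MvPolynomial (Fin 2) K,
      coeff veyμ (pbr K q (B1 : MvPolynomial (Fin 2) K)) = 0 := by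
    intro q
    rw [hB1]
    show coeff veyμ (pbr K q (X 0 * X 1^3)) = 0
    rw [pbr]
    simp only [dX, dY]
    have h1 : pderiv (1 : Fin 2) (X 0 * X 1^3 : MvPolynomial (Fin 2) K)
        = monomial (Finsupp.single 0 1 + Finsupp.single 1 2) 3 := by
      rw [mon_b1, vey_pderiv_mon K 1 1 3 1 1 2 3]
      · norm_num
      · ext i; fin_cases i <;> simp [Finsupp.single_apply, Finsupp.tsub_apply]
      · simp [Finsupp.single_apply]
    have h2 : pderiv (0 : Fin 2) (X 0 * X 1^3 : MvPolynomial (Fin 2) K)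
        = monomial (Finsupp.single 0 0 + Finsupp.single 1 3) 1 := by
      rw [mon_b1, vey_pderiv_mon K 0 1 3 1 0 3 1]
      · norm_num
      · ext i; fin_cases i <;> simp [Finsupp.single_apply, Finsupp.tsub_apply]
      · simp [Finsupp.single_apply]
    rw [coeff_sub, h1, h2, vey_coeff_mul_mon K _ _ _ (vey_not_le 1 2 (by norm_num) (by omega)),
      vey_coeff_mul_mon K _ _ _ (vey_not_le 0 3 (by norm_num) (by omega)), sub_zero]
  have van_l1 : ∀ q : MvPolynomial (Fin 2) K,
      coeff veyμ (pbr K (A1 : MvPolynomial (Fin 2) K) q) = 0 := by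
    intro q
    rw [hA1]
    show coeff veyμ (pbr K (X 0^3 * X 1) q) = 0
    rw [pbr]
    simp only [dX, dY]
    have h1 : pderiv (0 : Fin 2) (X 0^3 * X 1 : MvPolynomial (Fin 2) K)
        = monomial (Finsupp.single 0 2 + Finsupp.single 1 1) 3 := by
      rw [mon_a1, vey_pderiv_mon K 0 3 1 1 2 1 3]
      · norm_num
      · ext i; fin_cases i <;> simp [Finsupp.single_apply, Finsupp.tsub_apply]
      · simp [Finsupp.single_apply]
    have h2 : pderiv (1 : Fin 2) (X 0^3 * X 1 : MvPolynomial (Fin 2) K)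
        = monomial (Finsupp.single 0 3 + Finsupp.single 1 0) 1 := by
      rw [mon_a1, vey_pderiv_mon K 1 3 1 1 3 0 1]
      · norm_num
      · ext i; fin_cases i <;> simp [Finsupp.single_apply, Finsupp.tsub_apply]
      · simp [Finsupp.single_apply]
    rw [coeff_sub, h1, h2, vey_coeff_mon_mul K _ _ _ (vey_not_le 2 1 (by norm_num) (by omega)),
      vey_coeff_mon_mul K _ _ _ (vey_not_le 3 0 (by norm_num) (by omega)), sub_zero]
  have van_r2 : ∀ q : MvPolynomial (Fin 2) K,
      coeff veyμ (pbr K q (B2 : MvPolynomial (Fin 2) K)) = 0 := by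
    intro q
    rw [hB2]
    show coeff veyμ (pbr K q (X 1^4)) = 0
    rw [pbr]
    simp only [dX, dY]
    have h1 : pderiv (1 : Fin 2) (X 1^4 : MvPolynomial (Fin 2) K)
        = monomial (Finsupp.single 0 0 + Finsupp.single 1 3) 4 := by
      rw [mon_b2, vey_pderiv_mon K 1 0 4 1 0 3 4]
      · norm_num
      · ext i; fin_cases i <;> simp [Finsupp.single_apply, Finsupp.tsub_apply]
      · simp [Finsupp.single_apply]
    have h2 : pderiv (0 : Fin 2) (X 1^4 : MvPolynomial (Fin 2) K) = 0 := by
      rw [mon_b2, pderiv_monomial]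
      simp [Finsupp.single_apply]
    rw [coeff_sub, h1, h2, vey_coeff_mul_mon K _ _ _ (vey_not_le 0 3 (by norm_num) (by omega))]
    simp
  have van_l2 : ∀ q : MvPolynomial (Fin 2) K,
      coeff veyμ (pbr K (A2 : MvPolynomial (Fin 2) K) q) = 0 := by
    intro q
    rw [hA2]
    show coeff veyμ (pbr K (X 0^4) q) = 0
    rw [pbr]
    simp only [dX, dY]
    have h1 : pderiv (0 : Fin 2) (X 0^4 : MvPolynomial (Fin 2) K)
        = monomial (Finsupp.single 0 3 + Finsupp.single 1 0) 4 := by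
      rw [mon_a2, vey_pderiv_mon K 0 4 0 1 3 0 4]
      · norm_num
      · ext i; fin_cases i <;> simp [Finsupp.single_apply, Finsupp.tsub_apply]
      · simp [Finsupp.single_apply]
    have h2 : pderiv (1 : Fin 2) (X 0^4 : MvPolynomial (Fin 2) K) = 0 := by
      rw [mon_a2, pderiv_monomial]
      simp [Finsupp.single_apply]
    rw [coeff_sub, h1, h2, vey_coeff_mon_mul K _ _ _ (vey_not_le 3 0 (by norm_num) (by omega))]
    simp
  -- extract coefficients from the two instances of the hypothesis
  have key : ∀ (A B : Snoconst K) (v κ : K),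
      veyV K (A : MvPolynomial (Fin 2) K) (B : MvPolynomial (Fin 2) K) = v • (X 0 * X 1) →
      redK K (pbr K (A : MvPolynomial (Fin 2) K) (B : MvPolynomial (Fin 2) K)) = κ • U →
      (∀ q, coeff veyμ (pbr K (A : MvPolynomial (Fin 2) K) q) = 0) →
      (∀ q, coeff veyμ (pbr K q (B : MvPolynomial (Fin 2) K)) = 0) →
      v = κ * c := by
    intro A B v κ hV hred hvl hvr
    have h := congrArg (fun s : Snoconst K => coeff veyμ (s : MvPolynomial (Fin 2) K)) (hP A B)
    rw [hV] at h
    rw [vey_coeff_redK, coeff_smul, monX01, coeff_monomial, if_pos rfl, smul_eq_mul, mul_one] at h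
    rw [hred, map_smul] at h
    have hsub : ∀ (u w : Snoconst K),
        ((u - w : Snoconst K) : MvPolynomial (Fin 2) K)
          = (u : MvPolynomial (Fin 2) K) - (w : MvPolynomial (Fin 2) K) := fun _ _ => rfl
    rw [hsub, hsub, coeff_sub, coeff_sub] at h
    rw [vey_coeff_redK, vey_coeff_redK, hvl, hvr, sub_zero, sub_zero] at h
    rw [h]
    show (κ • P U : Snoconst K).val.coeff veyμ = κ * c
    rw [Submodule.coe_smul, coeff_smul, smul_eq_mul, hc]
  have e1 : (-3 : K) = 8 * c := key A1 B1 _ _ hV1 hred1 van_l1 van_r1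
  have e2 : (24 : K) = 16 * c := key A2 B2 _ _ hV2 hred2 van_l2 van_r2
  have : (30 : K) = 0 := by linear_combination e2 - 2 * e1
  exact absurd this (by norm_num)
end

section
/- The Moyal-Weyl product a *_W b = Σ_{n≥0} (ℏ^n/(2^n n!)) θ^{i₁j₁}···θ^{i_nj_n} (∂_{i₁}···∂_{i_n}a)(∂_{j₁}···∂_{j_n}b) on K[x¹,...,x^d][[ℏ]] is associative. -/
/-!
STATEMENT 14: The Moyal–Weyl product
`a *_W b = Σ_{n≥0} (ℏⁿ/(2ⁿ n!)) θ^{i₁j₁}···θ^{i_nj_n}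
(∂_{i₁}···∂_{i_n}a)(∂_{j₁}···∂_{j_n}b)` on `K[x¹,...,x^d][[ℏ]]` is associative
(for `θ` a constant antisymmetric matrix, char `K = 0`).  Formal power series
in `ℏ` are modelled as functions `ℕ → K[x¹,...,x^d]`. -/

open MvPolynomial

set_option linter.unusedSectionVars false
set_option maxHeartbeats 1000000

variable {K : Type} [Field K] [CharZero K] {d : ℕ}

/-- Iterated partial derivative along the indices `g`. -/
noncomputable def multiDeriv : {n : ℕ} → (Fin n → Fin d) →
    MvPolynomial (Fin d) K → MvPolynomial (Fin d) K
  | 0, _, a => a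
  | _ + 1, g, a => pderiv (g 0) (multiDeriv (Fin.tail g) a)

/-- The coefficient of `ℏⁿ` in the Moyal–Weyl product of two polynomials. -/
noncomputable def moyalCoeff (θ : Fin d → Fin d → K) (n : ℕ)
    (a b : MvPolynomial (Fin d) K) : MvPolynomial (Fin d) K :=
  ((2 ^ n * n.factorial : ℕ) : K)⁻¹ •
    ∑ g : Fin n → Fin d × Fin d,
      (∏ s : Fin n, θ (g s).1 (g s).2) •
        (multiDeriv (fun s => (g s).1) a * multiDeriv (fun s => (g s).2) b)

/-- The Moyal–Weyl product on `K[x¹,...,x^d][[ℏ]]`. -/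
noncomputable def moyalStar (θ : Fin d → Fin d → K)
    (a b : ℕ → MvPolynomial (Fin d) K) : ℕ → MvPolynomial (Fin d) K :=
  fun n => ∑ x ∈ Finset.HasAntidiagonal.antidiagonal n, ∑ y ∈ Finset.HasAntidiagonal.antidiagonal x.2,
    moyalCoeff θ x.1 (a y.1) (b y.2)



theorem coeff_arith (k l q : ℕ) :
    ((2 ^ (k + l) * (k + l).factorial : ℕ) : K)⁻¹ * ((2 ^ q * q.factorial : ℕ) : K)⁻¹ *
      (((k + l).choose k : ℕ) : K)
    = ((2 ^ (k + l + q) * (k.factorial * l.factorial * q.factorial) : ℕ) : K)⁻¹ := by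
  have h1 : (k + l).choose k * k.factorial * l.factorial = (k + l).factorial := by
    rw [Nat.choose_symm_add, Nat.add_choose_mul_factorial_mul_factorial]
  have hcast : (((k + l).choose k : ℕ) : K) * (k.factorial : K) * (l.factorial : K)
      = ((k + l).factorial : K) := by exact_mod_cast congrArg (Nat.cast (R := K)) h1
  have key : (((k + l).choose k : ℕ) : K) *
      ((2 ^ (k + l + q) * (k.factorial * l.factorial * q.factorial) : ℕ) : K)
      = ((2 ^ (k + l) * (k + l).factorial : ℕ) : K) * ((2 ^ q * q.factorial : ℕ) : K) := by
    push_cast [pow_add]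
    linear_combination ((2:K) ^ k * 2 ^ l * 2 ^ q * (q.factorial : K)) * hcast
  have hA : ((2 ^ (k + l) * (k + l).factorial : ℕ) : K) ≠ 0 :=
    Nat.cast_ne_zero.mpr (by positivity)
  have hB : ((2 ^ q * q.factorial : ℕ) : K) ≠ 0 := Nat.cast_ne_zero.mpr (by positivity)
  apply eq_inv_of_mul_eq_one_left
  calc ((2 ^ (k + l) * (k + l).factorial : ℕ) : K)⁻¹ * ((2 ^ q * q.factorial : ℕ) : K)⁻¹ *
        (((k + l).choose k : ℕ) : K) *
        ((2 ^ (k + l + q) * (k.factorial * l.factorial * q.factorial) : ℕ) : K)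
      = ((2 ^ (k + l) * (k + l).factorial : ℕ) : K)⁻¹ * ((2 ^ q * q.factorial : ℕ) : K)⁻¹ *
        (((2 ^ (k + l) * (k + l).factorial : ℕ) : K) * ((2 ^ q * q.factorial : ℕ) : K)) := by
        rw [mul_assoc, key]
    _ = 1 := by
        rw [mul_comm (((2 ^ (k + l) * (k + l).factorial : ℕ) : K)⁻¹), mul_assoc,
          ← mul_assoc (((2 ^ (k + l) * (k + l).factorial : ℕ) : K)⁻¹),
          inv_mul_cancel₀ hA, one_mul, inv_mul_cancel₀ hB]

theorem tri_sum {A : Type} [Ring A] [Algebra K A] (X Y W : A)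
    (hXY : Commute X Y) (hWX : Commute W X) (hWY : Commute W Y) (N : ℕ) :
    ∑ pq ∈ Finset.HasAntidiagonal.antidiagonal N,
      (((2 ^ pq.1 * pq.1.factorial : ℕ) : K)⁻¹ * ((2 ^ pq.2 * pq.2.factorial : ℕ) : K)⁻¹) •
        ((X + Y) ^ pq.1 * W ^ pq.2)
    = ∑ pq ∈ Finset.HasAntidiagonal.antidiagonal N,
      (((2 ^ pq.1 * pq.1.factorial : ℕ) : K)⁻¹ * ((2 ^ pq.2 * pq.2.factorial : ℕ) : K)⁻¹) •
        ((W + X) ^ pq.1 * Y ^ pq.2) := by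
  have expand : ∀ (U V T : A) (hUV : Commute U V), ∀ pq : ℕ × ℕ,
      (((2 ^ pq.1 * pq.1.factorial : ℕ) : K)⁻¹ * ((2 ^ pq.2 * pq.2.factorial : ℕ) : K)⁻¹) •
        ((U + V) ^ pq.1 * T ^ pq.2)
      = ∑ kl ∈ Finset.HasAntidiagonal.antidiagonal pq.1,
          ((((2 ^ pq.1 * pq.1.factorial : ℕ) : K)⁻¹ * ((2 ^ pq.2 * pq.2.factorial : ℕ) : K)⁻¹)
            * ((pq.1.choose kl.1 : ℕ) : K)) • (U ^ kl.1 * V ^ kl.2 * T ^ pq.2) := by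
    intro U V T hUV pq
    rw [hUV.add_pow', Finset.sum_mul, Finset.smul_sum]
    refine Finset.sum_congr rfl fun kl hkl => ?_
    rw [smul_mul_assoc, ← Nat.cast_smul_eq_nsmul K, smul_smul]
  have scal : ∀ k l q : ℕ,
      (((2 ^ (k + l) * (k + l).factorial : ℕ) : K)⁻¹ * ((2 ^ q * q.factorial : ℕ) : K)⁻¹)
        * (((k + l).choose k : ℕ) : K)
      = ((2 ^ (k + l + q) * (k.factorial * l.factorial * q.factorial) : ℕ) : K)⁻¹ :=
    fun k l q => coeff_arith k l q
  calc ∑ pq ∈ Finset.HasAntidiagonal.antidiagonal N,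
        (((2 ^ pq.1 * pq.1.factorial : ℕ) : K)⁻¹ * ((2 ^ pq.2 * pq.2.factorial : ℕ) : K)⁻¹) •
          ((X + Y) ^ pq.1 * W ^ pq.2)
      = ∑ pq ∈ Finset.HasAntidiagonal.antidiagonal N, ∑ kl ∈ Finset.HasAntidiagonal.antidiagonal pq.1,
          ((2 ^ (kl.1 + kl.2 + pq.2) *
            (kl.1.factorial * kl.2.factorial * pq.2.factorial) : ℕ) : K)⁻¹ •
            (X ^ kl.1 * Y ^ kl.2 * W ^ pq.2) := by
        refine Finset.sum_congr rfl fun pq hpq => ?_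
        rw [expand X Y W hXY pq]
        refine Finset.sum_congr rfl fun kl hkl => ?_
        simp only [Finset.HasAntidiagonal.mem_antidiagonal] at hkl
        rw [← hkl, scal kl.1 kl.2 pq.2]
    _ = ∑ pq ∈ Finset.HasAntidiagonal.antidiagonal N, ∑ kl ∈ Finset.HasAntidiagonal.antidiagonal pq.1,
          ((2 ^ (kl.1 + kl.2 + pq.2) *
            (kl.1.factorial * kl.2.factorial * pq.2.factorial) : ℕ) : K)⁻¹ •
            (W ^ kl.1 * X ^ kl.2 * Y ^ pq.2) := by
        rw [Finset.sum_sigma' (Finset.HasAntidiagonal.antidiagonal N) (fun pq => Finset.HasAntidiagonal.antidiagonal pq.1),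
          Finset.sum_sigma' (Finset.HasAntidiagonal.antidiagonal N) (fun pq => Finset.HasAntidiagonal.antidiagonal pq.1)]
        refine Finset.sum_nbij'
          (fun x => ⟨(x.1.2 + x.2.1, x.2.2), (x.1.2, x.2.1)⟩)
          (fun y => ⟨(y.2.2 + y.1.2, y.2.1), (y.2.2, y.1.2)⟩) ?_ ?_ ?_ ?_ ?_
        · rintro ⟨⟨p, q⟩, ⟨k, l⟩⟩ ha
          simp only [Finset.mem_sigma, Finset.HasAntidiagonal.mem_antidiagonal] at ha ⊢
          exact ⟨by omega, trivial⟩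
        · rintro ⟨⟨p, q⟩, ⟨k, l⟩⟩ ha
          simp only [Finset.mem_sigma, Finset.HasAntidiagonal.mem_antidiagonal] at ha ⊢
          exact ⟨by omega, trivial⟩
        · rintro ⟨⟨p, q⟩, ⟨k, l⟩⟩ ha
          simp only [Finset.mem_sigma, Finset.HasAntidiagonal.mem_antidiagonal] at ha
          obtain ⟨h1, h2⟩ := ha
          subst h2
          rfl
        · rintro ⟨⟨p, q⟩, ⟨k, l⟩⟩ ha
          simp only [Finset.mem_sigma, Finset.HasAntidiagonal.mem_antidiagonal] at ha
          obtain ⟨h1, h2⟩ := ha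
          subst h2
          rfl
        · rintro ⟨⟨p, q⟩, ⟨k, l⟩⟩ ha
          have hcomm : Commute (W ^ q) (X ^ k * Y ^ l) :=
            (hWX.pow_pow q k).mul_right (hWY.pow_pow q l)
          have hγ : ((2 ^ (q + k + l) * (q.factorial * k.factorial * l.factorial) : ℕ) : K)⁻¹
              = ((2 ^ (k + l + q) * (k.factorial * l.factorial * q.factorial) : ℕ) : K)⁻¹ := by
            rw [show q + k + l = k + l + q from by omega,
              show q.factorial * k.factorial * l.factorial
                = k.factorial * l.factorial * q.factorial from by ring]
          have hprod : X ^ k * Y ^ l * W ^ q = W ^ q * X ^ k * Y ^ l := by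
            rw [← hcomm.eq, ← mul_assoc]
          dsimp only
          rw [← hγ, hprod]
    _ = _ := by
        refine Finset.sum_congr rfl fun pq hpq => ?_
        rw [expand W X Y hWX pq]
        refine (Finset.sum_congr rfl fun kl hkl => ?_).symm
        simp only [Finset.HasAntidiagonal.mem_antidiagonal] at hkl
        rw [← hkl, scal kl.1 kl.2 pq.2]


open Finset in
theorem reindexL {M : Type*} [AddCommMonoid M] (n : ℕ) (F : ℕ → ℕ → ℕ → ℕ → ℕ → M) :
    (∑ x ∈ antidiagonal n, ∑ y ∈ antidiagonal x.2, ∑ u ∈ antidiagonal y.1,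
      ∑ v ∈ antidiagonal u.2, F x.1 u.1 v.1 v.2 y.2)
  = ∑ w ∈ antidiagonal n, ∑ z ∈ antidiagonal w.2, ∑ r ∈ antidiagonal z.2,
      ∑ o ∈ antidiagonal w.1, F o.1 o.2 z.1 r.1 r.2 := by
  rw [Finset.sum_sigma', Finset.sum_sigma', Finset.sum_sigma']
  conv_rhs => rw [Finset.sum_sigma', Finset.sum_sigma', Finset.sum_sigma']
  refine Finset.sum_nbij'
    (fun a => ⟨⟨⟨(a.1.1.1.1 + a.1.2.1, a.2.1 + a.2.2 + a.1.1.2.2),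
        (a.2.1, a.2.2 + a.1.1.2.2)⟩, (a.2.2, a.1.1.2.2)⟩, (a.1.1.1.1, a.1.2.1)⟩)
    (fun b => ⟨⟨⟨(b.2.1, b.2.2 + b.1.1.2.1 + b.1.2.1 + b.1.2.2),
        (b.2.2 + b.1.1.2.1 + b.1.2.1, b.1.2.2)⟩, (b.2.2, b.1.1.2.1 + b.1.2.1)⟩,
        (b.1.1.2.1, b.1.2.1)⟩)
    ?_ ?_ ?_ ?_ ?_
  · rintro ⟨⟨⟨⟨x1, x2⟩, ⟨y1, y2⟩⟩, ⟨u1, u2⟩⟩, ⟨v1, v2⟩⟩ ha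
    simp only [Finset.mem_sigma, Finset.HasAntidiagonal.mem_antidiagonal, and_true, true_and] at ha ⊢
    omega
  · rintro ⟨⟨⟨⟨x1, x2⟩, ⟨y1, y2⟩⟩, ⟨u1, u2⟩⟩, ⟨v1, v2⟩⟩ ha
    simp only [Finset.mem_sigma, Finset.HasAntidiagonal.mem_antidiagonal, and_true, true_and] at ha ⊢
    omega
  · rintro ⟨⟨⟨⟨x1, x2⟩, ⟨y1, y2⟩⟩, ⟨u1, u2⟩⟩, ⟨v1, v2⟩⟩ ha
    simp only [Finset.mem_sigma, Finset.HasAntidiagonal.mem_antidiagonal, and_true, true_and] at ha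
    simp only [Sigma.ext_iff, Prod.ext_iff, heq_eq_eq, and_true, true_and]
    omega
  · rintro ⟨⟨⟨⟨w1, w2⟩, ⟨z1, z2⟩⟩, ⟨r1, r2⟩⟩, ⟨o1, o2⟩⟩ ha
    simp only [Finset.mem_sigma, Finset.HasAntidiagonal.mem_antidiagonal, and_true, true_and] at ha
    simp only [Sigma.ext_iff, Prod.ext_iff, heq_eq_eq, and_true, true_and]
    omega
  · rintro ⟨⟨⟨⟨x1, x2⟩, ⟨y1, y2⟩⟩, ⟨u1, u2⟩⟩, ⟨v1, v2⟩⟩ ha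
    rfl

open Finset in
theorem reindexR {M : Type*} [AddCommMonoid M] (n : ℕ) (F : ℕ → ℕ → ℕ → ℕ → ℕ → M) :
    (∑ x ∈ antidiagonal n, ∑ y ∈ antidiagonal x.2, ∑ u ∈ antidiagonal y.2,
      ∑ v ∈ antidiagonal u.2, F x.1 u.1 y.1 v.1 v.2)
  = ∑ w ∈ antidiagonal n, ∑ z ∈ antidiagonal w.2, ∑ r ∈ antidiagonal z.2,
      ∑ o ∈ antidiagonal w.1, F o.1 o.2 z.1 r.1 r.2 := by
  rw [Finset.sum_sigma', Finset.sum_sigma', Finset.sum_sigma']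
  conv_rhs => rw [Finset.sum_sigma', Finset.sum_sigma', Finset.sum_sigma']
  refine Finset.sum_nbij'
    (fun a => ⟨⟨⟨(a.1.1.1.1 + a.1.2.1, a.1.1.2.1 + a.2.1 + a.2.2),
        (a.1.1.2.1, a.2.1 + a.2.2)⟩, (a.2.1, a.2.2)⟩, (a.1.1.1.1, a.1.2.1)⟩)
    (fun b => ⟨⟨⟨(b.2.1, b.1.1.2.1 + b.2.2 + b.1.2.1 + b.1.2.2),
        (b.1.1.2.1, b.2.2 + b.1.2.1 + b.1.2.2)⟩, (b.2.2, b.1.2.1 + b.1.2.2)⟩,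
        (b.1.2.1, b.1.2.2)⟩)
    ?_ ?_ ?_ ?_ ?_
  · rintro ⟨⟨⟨⟨x1, x2⟩, ⟨y1, y2⟩⟩, ⟨u1, u2⟩⟩, ⟨v1, v2⟩⟩ ha
    simp only [Finset.mem_sigma, Finset.HasAntidiagonal.mem_antidiagonal, and_true, true_and] at ha ⊢
    omega
  · rintro ⟨⟨⟨⟨x1, x2⟩, ⟨y1, y2⟩⟩, ⟨u1, u2⟩⟩, ⟨v1, v2⟩⟩ ha
    simp only [Finset.mem_sigma, Finset.HasAntidiagonal.mem_antidiagonal, and_true, true_and] at ha ⊢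
    omega
  · rintro ⟨⟨⟨⟨x1, x2⟩, ⟨y1, y2⟩⟩, ⟨u1, u2⟩⟩, ⟨v1, v2⟩⟩ ha
    simp only [Finset.mem_sigma, Finset.HasAntidiagonal.mem_antidiagonal, and_true, true_and] at ha
    simp only [Sigma.ext_iff, Prod.ext_iff, heq_eq_eq, and_true, true_and]
    omega
  · rintro ⟨⟨⟨⟨w1, w2⟩, ⟨z1, z2⟩⟩, ⟨r1, r2⟩⟩, ⟨o1, o2⟩⟩ ha
    simp only [Finset.mem_sigma, Finset.HasAntidiagonal.mem_antidiagonal, and_true, true_and] at ha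
    simp only [Sigma.ext_iff, Prod.ext_iff, heq_eq_eq, and_true, true_and]
    omega
  · rintro ⟨⟨⟨⟨x1, x2⟩, ⟨y1, y2⟩⟩, ⟨u1, u2⟩⟩, ⟨v1, v2⟩⟩ ha
    rfl




-- pderiv commutation
theorem pderiv_comm' {σ : Type*} [DecidableEq σ] (x y : σ) (f : MvPolynomial σ K) :
    pderiv x (pderiv y f) = pderiv y (pderiv x f) := by
  induction f using MvPolynomial.induction_on with
  | C a => simp
  | add p q hp hq => simp [hp, hq]
  | mul_X p n ih => simp [pderiv_mul, ih, pderiv_X, Pi.single_apply, apply_ite (pderiv x),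
      apply_ite (pderiv y)]; ring

/-- `pderiv` as a module endomorphism. -/
noncomputable def pd {σ : Type*} (x : σ) : Module.End K (MvPolynomial σ K) :=
  (pderiv x).toLinearMap

@[simp] theorem pd_apply {σ : Type*} (x : σ) (f : MvPolynomial σ K) :
    pd x f = pderiv x f := rfl

theorem commute_pd {σ : Type*} [DecidableEq σ] (x y : σ) :
    Commute (pd (K := K) x) (pd y) :=
  LinearMap.ext fun f => by
    simp only [Module.End.mul_apply, pd_apply]
    exact pderiv_comm' x y f

theorem multiDeriv_zero_fun (g : Fin 0 → Fin d) (a : MvPolynomial (Fin d) K) :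
    multiDeriv g a = a := rfl

theorem multiDeriv_succ {n : ℕ} (g : Fin (n + 1) → Fin d) (a : MvPolynomial (Fin d) K) :
    multiDeriv g a = pderiv (g 0) (multiDeriv (Fin.tail g) a) := rfl

theorem multiDeriv_add {n : ℕ} (g : Fin n → Fin d) (a b : MvPolynomial (Fin d) K) :
    multiDeriv g (a + b) = multiDeriv g a + multiDeriv g b := by
  induction n with
  | zero => rfl
  | succ n ih => simp [multiDeriv_succ, ih, map_add]

theorem multiDeriv_smul {n : ℕ} (g : Fin n → Fin d) (r : K) (a : MvPolynomial (Fin d) K) :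
    multiDeriv g (r • a) = r • multiDeriv g a := by
  induction n with
  | zero => rfl
  | succ n ih => simp [multiDeriv_succ, ih, map_smul]

theorem multiDeriv_zero {n : ℕ} (g : Fin n → Fin d) :
    multiDeriv g (0 : MvPolynomial (Fin d) K) = 0 := by
  induction n with
  | zero => rfl
  | succ n ih => simp [multiDeriv_succ, ih]

theorem multiDeriv_sum {n : ℕ} {ι : Type*} (s : Finset ι) (g : Fin n → Fin d)
    (F : ι → MvPolynomial (Fin d) K) :
    multiDeriv g (∑ x ∈ s, F x) = ∑ x ∈ s, multiDeriv g (F x) := by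
  classical
  induction s using Finset.induction_on with
  | empty => simp [multiDeriv_zero]
  | insert a s h ih => simp [Finset.sum_insert h, multiDeriv_add, ih]

/-- Embedding of polynomials into slot `u` of the 3-slot ring. -/
noncomputable def eSlot (u : Fin 3) :
    MvPolynomial (Fin d) K →ₐ[K] MvPolynomial (Fin 3 × Fin d) K :=
  rename fun i => (u, i)

/-- Collapse all slots back to the original variables. -/
noncomputable def colSlot : MvPolynomial (Fin 3 × Fin d) K →ₐ[K] MvPolynomial (Fin d) K :=
  rename Prod.snd

theorem colSlot_eSlot (u : Fin 3) (A : MvPolynomial (Fin d) K) :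
    colSlot (eSlot u A) = A := by
  rw [eSlot, colSlot, rename_rename]
  exact rename_id_apply A

theorem pderiv_eSlot_same (u : Fin 3) (i : Fin d) (A : MvPolynomial (Fin d) K) :
    pderiv (u, i) (eSlot u A) = eSlot u (pderiv i A) :=
  pderiv_rename (fun a b h => by simpa using h) i A

theorem pderiv_eSlot_ne {u v : Fin 3} (h : v ≠ u) (i : Fin d) (A : MvPolynomial (Fin d) K) :
    pderiv (v, i) (eSlot u A) = 0 := by
  apply pderiv_eq_zero_of_notMem_vars
  intro hmem
  have := vars_rename _ _ hmem
  simp only [Finset.mem_image] at this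
  obtain ⟨x, -, hx⟩ := this
  exact h (by simpa using congrArg Prod.fst hx.symm)

/-- The bidifferential operator `P_{uv} = Σ θ^{ij} ∂_{(u,i)} ∂_{(v,j)}`. -/
noncomputable def Pop (θ : Fin d → Fin d → K) (u v : Fin 3) :
    Module.End K (MvPolynomial (Fin 3 × Fin d) K) :=
  ∑ i : Fin d, ∑ j : Fin d, θ i j • (pd (u, i) * pd (v, j))

theorem Pop_apply (θ : Fin d → Fin d → K) (u v : Fin 3)
    (Z : MvPolynomial (Fin 3 × Fin d) K) :
    Pop θ u v Z = ∑ i : Fin d, ∑ j : Fin d,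
      θ i j • pderiv (u, i) (pderiv (v, j) Z) := by
  simp [Pop, LinearMap.sum_apply, LinearMap.smul_apply, Module.End.mul_apply]

theorem commute_Pop (θ : Fin d → Fin d → K) (u v u' v' : Fin 3) :
    Commute (Pop θ u v) (Pop θ u' v') := by
  apply Commute.sum_left; intro i _
  apply Commute.sum_right; intro i' _
  apply Commute.sum_left; intro j _
  apply Commute.sum_right; intro j' _
  apply Commute.smul_left
  apply Commute.smul_right
  exact ((commute_pd _ _).mul_right (commute_pd _ _)).mul_left
    ((commute_pd _ _).mul_right (commute_pd _ _))

theorem multiDeriv_cons {n : ℕ} (x : Fin d) (h : Fin n → Fin d) (A : MvPolynomial (Fin d) K) :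
    multiDeriv (Fin.cons x h) A = pderiv x (multiDeriv h A) := by
  rw [multiDeriv_succ]; simp [Fin.tail_cons]

theorem Pop_apply_prod (θ : Fin d → Fin d → K) {u v : Fin 3} (huv : u ≠ v)
    {S : MvPolynomial (Fin 3 × Fin d) K}
    (hSu : ∀ i, pderiv (u, i) S = 0) (hSv : ∀ j, pderiv (v, j) S = 0)
    (X Y : MvPolynomial (Fin d) K) :
    Pop θ u v (eSlot u X * eSlot v Y * S) = ∑ i : Fin d, ∑ j : Fin d,
      θ i j • (eSlot u (pderiv i X) * eSlot v (pderiv j Y) * S) := by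
  rw [Pop_apply]
  refine Finset.sum_congr rfl fun i _ => Finset.sum_congr rfl fun j _ => ?_
  congr 1
  rw [pderiv_mul, pderiv_mul, pderiv_eSlot_ne (Ne.symm huv), pderiv_eSlot_same, hSv]
  simp only [zero_mul, zero_add, mul_zero, add_zero]
  rw [pderiv_mul, pderiv_mul, pderiv_eSlot_same, pderiv_eSlot_ne huv, hSu]
  simp only [zero_mul, add_zero, mul_zero]

theorem Pop_pow_expand (θ : Fin d → Fin d → K) {u v : Fin 3} (huv : u ≠ v)
    {S : MvPolynomial (Fin 3 × Fin d) K}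
    (hSu : ∀ i, pderiv (u, i) S = 0) (hSv : ∀ j, pderiv (v, j) S = 0)
    (n : ℕ) (A B : MvPolynomial (Fin d) K) :
    (Pop θ u v ^ n) (eSlot u A * eSlot v B * S) =
      ∑ g : Fin n → Fin d × Fin d, (∏ s : Fin n, θ (g s).1 (g s).2) •
        (eSlot u (multiDeriv (fun s => (g s).1) A) *
          eSlot v (multiDeriv (fun s => (g s).2) B) * S) := by
  induction n generalizing A B with
  | zero =>
    simp [multiDeriv_zero_fun]
  | succ n ih =>
    rw [pow_succ', Module.End.mul_apply, ih, map_sum]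
    rw [← Equiv.sum_comp (Fin.consEquiv (fun _ => Fin d × Fin d))
      (fun g => (∏ s : Fin (n+1), θ (g s).1 (g s).2) •
        (eSlot u (multiDeriv (fun s => (g s).1) A) *
          eSlot v (multiDeriv (fun s => (g s).2) B) * S))]
    rw [Fintype.sum_prod_type]
    have hcons : ∀ (x : Fin d × Fin d) (g : Fin n → Fin d × Fin d),
        (Fin.consEquiv (fun _ => Fin d × Fin d)) (x, g) = Fin.cons x g := fun _ _ => rfl
    have key : ∀ (x : Fin d × Fin d) (g : Fin n → Fin n → Fin d), True := fun _ _ => trivial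
    calc ∑ g : Fin n → Fin d × Fin d, Pop θ u v
          ((∏ s : Fin n, θ (g s).1 (g s).2) •
            (eSlot u (multiDeriv (fun s => (g s).1) A) *
              eSlot v (multiDeriv (fun s => (g s).2) B) * S))
        = ∑ g : Fin n → Fin d × Fin d, ∑ i : Fin d, ∑ j : Fin d,
            ((∏ s : Fin n, θ (g s).1 (g s).2) * θ i j) •
              (eSlot u (pderiv i (multiDeriv (fun s => (g s).1) A)) *
                eSlot v (pderiv j (multiDeriv (fun s => (g s).2) B)) * S) := by
          refine Finset.sum_congr rfl fun g _ => ?_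
          rw [map_smul, Pop_apply_prod θ huv hSu hSv]
          simp [Finset.smul_sum, smul_smul, mul_comm]
      _ = ∑ x : Fin d × Fin d, ∑ g : Fin n → Fin d × Fin d,
            (θ x.1 x.2 * ∏ s : Fin n, θ (g s).1 (g s).2) •
              (eSlot u (pderiv x.1 (multiDeriv (fun s => (g s).1) A)) *
                eSlot v (pderiv x.2 (multiDeriv (fun s => (g s).2) B)) * S) := by
          rw [Finset.sum_comm]
          rw [Fintype.sum_prod_type]
          refine Finset.sum_congr rfl fun i _ => ?_
          rw [Finset.sum_comm]
          refine Finset.sum_congr rfl fun j _ => Finset.sum_congr rfl fun g _ => ?_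
          rw [mul_comm]
      _ = _ := by
          refine Finset.sum_congr rfl fun x _ => Finset.sum_congr rfl fun g _ => ?_
          rw [hcons]
          have h1 : (fun s : Fin (n+1) => ((Fin.cons x g : Fin (n+1) → Fin d × Fin d) s).1)
              = Fin.cons x.1 (fun s => (g s).1) := by
            funext s
            refine Fin.cases ?_ (fun s => ?_) s <;> simp [Fin.cons_zero, Fin.cons_succ]
          have h2 : (fun s : Fin (n+1) => ((Fin.cons x g : Fin (n+1) → Fin d × Fin d) s).2)
              = Fin.cons x.2 (fun s => (g s).2) := by
            funext s
            refine Fin.cases ?_ (fun s => ?_) s <;> simp [Fin.cons_zero, Fin.cons_succ]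
          rw [h1, h2, multiDeriv_cons, multiDeriv_cons, Fin.prod_univ_succ]
          simp [Fin.cons_zero, Fin.cons_succ]


theorem moyalCoeff_eq_Pop (θ : Fin d → Fin d → K) {u v : Fin 3} (huv : u ≠ v) (n : ℕ)
    (A B : MvPolynomial (Fin d) K) :
    moyalCoeff θ n A B = ((2 ^ n * n.factorial : ℕ) : K)⁻¹ •
      colSlot ((Pop θ u v ^ n) (eSlot u A * eSlot v B)) := by
  have h := Pop_pow_expand θ huv (S := (1 : MvPolynomial (Fin 3 × Fin d) K))
    (fun i => pderiv_one) (fun j => pderiv_one) n A B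
  rw [show eSlot u A * eSlot v B = eSlot u A * eSlot v B * 1 from (mul_one _).symm, h, map_sum]
  unfold moyalCoeff
  congr 1
  refine Finset.sum_congr rfl fun g _ => ?_
  rw [map_smul, mul_one, map_mul, colSlot_eSlot, colSlot_eSlot]

/-- Merging slots via a map on slot indices. -/
noncomputable def mg (f : Fin 3 → Fin 3) :
    MvPolynomial (Fin 3 × Fin d) K →ₐ[K] MvPolynomial (Fin 3 × Fin d) K :=
  rename (Prod.map f id)

theorem mg_eSlot (f : Fin 3 → Fin 3) (u : Fin 3) (A : MvPolynomial (Fin d) K) :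
    mg f (eSlot u A) = eSlot (f u) A := by
  rw [mg, eSlot, rename_rename]; rfl

theorem colSlot_mg (f : Fin 3 → Fin 3) (Z : MvPolynomial (Fin 3 × Fin d) K) :
    colSlot (mg f Z) = colSlot Z := by
  rw [mg, colSlot, rename_rename]; rfl

theorem pderiv_mg (f : Fin 3 → Fin 3) (u : Fin 3) (i : Fin d)
    (Z : MvPolynomial (Fin 3 × Fin d) K) :
    pderiv (u, i) (mg f Z) =
      ∑ w ∈ Finset.univ.filter (fun w => f w = u), mg f (pderiv (w, i) Z) := by
  classical
  induction Z using MvPolynomial.induction_on with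
  | C a => simp [mg, pderiv_C]
  | add p q hp hq => simp only [map_add, hp, hq, Finset.sum_add_distrib]
  | mul_X p s ih =>
    obtain ⟨v, x⟩ := s
    have mgX : mg (d := d) (K := K) f (X (v, x)) = X (f v, x) := by
      rw [mg, rename_X]; rfl
    have hX : ∀ (w u : Fin 3), pderiv ((w, i) : Fin 3 × Fin d)
        (X ((u, x) : Fin 3 × Fin d) : MvPolynomial (Fin 3 × Fin d) K)
        = if u = w ∧ x = i then 1 else 0 := by
      intro w u; rw [pderiv_X]; simp [Pi.single_apply, Prod.ext_iff]
    have expand : ∀ w : Fin 3, mg f (pderiv ((w, i) : Fin 3 × Fin d) (p * X (v, x)))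
        = mg f (pderiv ((w, i) : Fin 3 × Fin d) p) * X (f v, x) +
          mg f p * (if v = w ∧ x = i then 1 else 0) := by
      intro w
      rw [pderiv_mul, hX, map_add, map_mul, map_mul, mgX]
      congr 1
      simp [apply_ite (mg (d := d) (K := K) f)]
    rw [map_mul, mgX, pderiv_mul, ih, hX]
    simp only [expand, Finset.sum_add_distrib, ← Finset.sum_mul, ← Finset.mul_sum]
    congr 1
    by_cases hx : x = i
    · subst hx
      simp only [and_true]
      rw [Finset.sum_ite_eq]
      simp only [Finset.mem_filter, Finset.mem_univ, true_and]
    · simp [hx]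

/-- slot merge `0,1 ↦ 0`, `2 ↦ 2`. -/
def f01 : Fin 3 → Fin 3 := ![0, 0, 2]
/-- slot merge `0 ↦ 0`, `1,2 ↦ 2`. -/
def f12 : Fin 3 → Fin 3 := ![0, 2, 2]

theorem Pop_mg01 (θ : Fin d → Fin d → K) (Z : MvPolynomial (Fin 3 × Fin d) K) :
    Pop θ 0 2 (mg f01 Z) = mg f01 ((Pop θ 0 2 + Pop θ 1 2) Z) := by
  have h0 : Finset.univ.filter (fun w => f01 w = 0) = ({0, 1} : Finset (Fin 3)) := by decide
  have h2 : Finset.univ.filter (fun w => f01 w = 2) = ({2} : Finset (Fin 3)) := by decide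
  rw [Pop_apply, LinearMap.add_apply, Pop_apply, Pop_apply, map_add, map_sum, map_sum]
  rw [← Finset.sum_add_distrib]
  refine Finset.sum_congr rfl fun i _ => ?_
  rw [map_sum, map_sum, ← Finset.sum_add_distrib]
  refine Finset.sum_congr rfl fun j _ => ?_
  rw [pderiv_mg, h2, Finset.sum_singleton, pderiv_mg, h0]
  rw [Finset.sum_insert (by decide), Finset.sum_singleton]
  rw [map_smul, map_smul, smul_add]

theorem Pop_mg12 (θ : Fin d → Fin d → K) (Z : MvPolynomial (Fin 3 × Fin d) K) :
    Pop θ 0 2 (mg f12 Z) = mg f12 ((Pop θ 0 1 + Pop θ 0 2) Z) := by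
  have h0 : Finset.univ.filter (fun w => f12 w = 0) = ({0} : Finset (Fin 3)) := by decide
  have h2 : Finset.univ.filter (fun w => f12 w = 2) = ({1, 2} : Finset (Fin 3)) := by decide
  rw [Pop_apply, LinearMap.add_apply, Pop_apply, Pop_apply, map_add, map_sum, map_sum]
  rw [← Finset.sum_add_distrib]
  refine Finset.sum_congr rfl fun i _ => ?_
  rw [map_sum, map_sum, ← Finset.sum_add_distrib]
  refine Finset.sum_congr rfl fun j _ => ?_
  rw [pderiv_mg, h2, Finset.sum_insert (by decide), Finset.sum_singleton, map_add]
  rw [pderiv_mg, h0, Finset.sum_singleton, pderiv_mg, h0, Finset.sum_singleton]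
  rw [map_smul, map_smul, smul_add]

theorem Pop_pow_mg01 (θ : Fin d → Fin d → K) (p : ℕ) (Z : MvPolynomial (Fin 3 × Fin d) K) :
    (Pop θ 0 2 ^ p) (mg f01 Z) = mg f01 (((Pop θ 0 2 + Pop θ 1 2) ^ p) Z) := by
  induction p generalizing Z with
  | zero => simp
  | succ p ih =>
    rw [pow_succ, Module.End.mul_apply, Pop_mg01, ih, pow_succ, Module.End.mul_apply]

theorem Pop_pow_mg12 (θ : Fin d → Fin d → K) (p : ℕ) (Z : MvPolynomial (Fin 3 × Fin d) K) :
    (Pop θ 0 2 ^ p) (mg f12 Z) = mg f12 (((Pop θ 0 1 + Pop θ 0 2) ^ p) Z) := by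
  induction p generalizing Z with
  | zero => simp
  | succ p ih =>
    rw [pow_succ, Module.End.mul_apply, Pop_mg12, ih, pow_succ, Module.End.mul_apply]

theorem main_L (θ : Fin d → Fin d → K) (p q : ℕ) (A B C : MvPolynomial (Fin d) K) :
    moyalCoeff θ p (moyalCoeff θ q A B) C
      = (((2 ^ p * p.factorial : ℕ) : K)⁻¹ * ((2 ^ q * q.factorial : ℕ) : K)⁻¹) •
        colSlot (((Pop θ 0 2 + Pop θ 1 2) ^ p * Pop θ 0 1 ^ q)
          (eSlot 0 A * eSlot 1 B * eSlot 2 C)) := by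
  have h02 : (0 : Fin 3) ≠ 2 := by decide
  have h01 : (0 : Fin 3) ≠ 1 := by decide
  have hSu : ∀ i : Fin d, pderiv ((0 : Fin 3), i) (eSlot (d := d) (K := K) 2 C) = 0 :=
    fun i => pderiv_eSlot_ne (by decide) i C
  have hSv : ∀ j : Fin d, pderiv ((1 : Fin 3), j) (eSlot (d := d) (K := K) 2 C) = 0 :=
    fun j => pderiv_eSlot_ne (by decide) j C
  have hexp := Pop_pow_expand θ h01 hSu hSv q A B
  have hmg : ∀ X Y : MvPolynomial (Fin d) K,
      mg (d := d) (K := K) f01 (eSlot 0 X * eSlot 1 Y * eSlot 2 C)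
        = eSlot 0 (X * Y) * eSlot 2 C := by
    intro X Y
    rw [map_mul, map_mul, mg_eSlot, mg_eSlot, mg_eSlot, map_mul]
    rfl
  have step2 : ((2 ^ q * q.factorial : ℕ) : K)⁻¹ •
        mg f01 ((Pop θ 0 1 ^ q) (eSlot 0 A * eSlot 1 B * eSlot 2 C))
      = eSlot 0 (moyalCoeff θ q A B) * eSlot 2 C := by
    rw [hexp, map_sum]
    calc ((2 ^ q * q.factorial : ℕ) : K)⁻¹ •
          ∑ g : Fin q → Fin d × Fin d, mg f01 ((∏ s : Fin q, θ (g s).1 (g s).2) •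
            (eSlot 0 (multiDeriv (fun s => (g s).1) A) *
              eSlot 1 (multiDeriv (fun s => (g s).2) B) * eSlot 2 C))
        = ((2 ^ q * q.factorial : ℕ) : K)⁻¹ •
          ((∑ g : Fin q → Fin d × Fin d, (∏ s : Fin q, θ (g s).1 (g s).2) •
            eSlot 0 (multiDeriv (fun s => (g s).1) A * multiDeriv (fun s => (g s).2) B)) *
              eSlot 2 C) := by
          congr 1
          rw [Finset.sum_mul]
          refine Finset.sum_congr rfl fun g _ => ?_
          rw [map_smul, hmg, smul_mul_assoc]
      _ = _ := by
          unfold moyalCoeff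
          rw [map_smul, smul_mul_assoc]
          congr 1
          rw [map_sum, Finset.sum_mul, Finset.sum_mul]
          refine Finset.sum_congr rfl fun g _ => ?_
          rw [map_smul, smul_mul_assoc]
  rw [moyalCoeff_eq_Pop θ h02 p _ C, ← step2, map_smul, map_smul, Pop_pow_mg01, colSlot_mg,
    smul_smul, Module.End.mul_apply]

theorem main_R (θ : Fin d → Fin d → K) (p q : ℕ) (A B C : MvPolynomial (Fin d) K) :
    moyalCoeff θ p A (moyalCoeff θ q B C)
      = (((2 ^ p * p.factorial : ℕ) : K)⁻¹ * ((2 ^ q * q.factorial : ℕ) : K)⁻¹) •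
        colSlot (((Pop θ 0 1 + Pop θ 0 2) ^ p * Pop θ 1 2 ^ q)
          (eSlot 0 A * eSlot 1 B * eSlot 2 C)) := by
  have h02 : (0 : Fin 3) ≠ 2 := by decide
  have h12 : (1 : Fin 3) ≠ 2 := by decide
  have hSu : ∀ i : Fin d, pderiv ((1 : Fin 3), i) (eSlot (d := d) (K := K) 0 A) = 0 :=
    fun i => pderiv_eSlot_ne (by decide) i A
  have hSv : ∀ j : Fin d, pderiv ((2 : Fin 3), j) (eSlot (d := d) (K := K) 0 A) = 0 :=
    fun j => pderiv_eSlot_ne (by decide) j A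
  have hexp := Pop_pow_expand θ h12 hSu hSv q B C
  have hZ : eSlot (d := d) (K := K) 0 A * eSlot 1 B * eSlot 2 C
      = eSlot 1 B * eSlot 2 C * eSlot 0 A := by ring
  have hmg : ∀ X Y : MvPolynomial (Fin d) K,
      mg (d := d) (K := K) f12 (eSlot 1 X * eSlot 2 Y * eSlot 0 A)
        = eSlot 0 A * eSlot 2 (X * Y) := by
    intro X Y
    rw [map_mul, map_mul, mg_eSlot, mg_eSlot, mg_eSlot, map_mul]
    show eSlot 2 X * eSlot 2 Y * eSlot 0 A = _
    ring
  have step2 : ((2 ^ q * q.factorial : ℕ) : K)⁻¹ •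
        mg f12 ((Pop θ 1 2 ^ q) (eSlot 0 A * eSlot 1 B * eSlot 2 C))
      = eSlot 0 A * eSlot 2 (moyalCoeff θ q B C) := by
    rw [hZ, hexp, map_sum]
    calc ((2 ^ q * q.factorial : ℕ) : K)⁻¹ •
          ∑ g : Fin q → Fin d × Fin d, mg f12 ((∏ s : Fin q, θ (g s).1 (g s).2) •
            (eSlot 1 (multiDeriv (fun s => (g s).1) B) *
              eSlot 2 (multiDeriv (fun s => (g s).2) C) * eSlot 0 A))
        = ((2 ^ q * q.factorial : ℕ) : K)⁻¹ •
          (eSlot 0 A * ∑ g : Fin q → Fin d × Fin d, (∏ s : Fin q, θ (g s).1 (g s).2) •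
            eSlot 2 (multiDeriv (fun s => (g s).1) B * multiDeriv (fun s => (g s).2) C)) := by
          congr 1
          rw [Finset.mul_sum]
          refine Finset.sum_congr rfl fun g _ => ?_
          rw [map_smul, hmg, mul_smul_comm]
      _ = _ := by
          unfold moyalCoeff
          rw [map_smul, mul_smul_comm]
          congr 1
          rw [map_sum, Finset.mul_sum, Finset.mul_sum]
          refine Finset.sum_congr rfl fun g _ => ?_
          rw [map_smul, mul_smul_comm]
  rw [moyalCoeff_eq_Pop θ h02 p A _, ← step2, map_smul, map_smul, Pop_pow_mg12, colSlot_mg,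
    smul_smul, Module.End.mul_apply]


theorem moyalCoeff_sum_left {ι : Type*} (θ : Fin d → Fin d → K) (n : ℕ) (s : Finset ι)
    (F : ι → MvPolynomial (Fin d) K) (b : MvPolynomial (Fin d) K) :
    moyalCoeff θ n (∑ x ∈ s, F x) b = ∑ x ∈ s, moyalCoeff θ n (F x) b := by
  unfold moyalCoeff
  rw [← Finset.smul_sum]
  congr 1
  conv_rhs => rw [Finset.sum_comm]
  refine Finset.sum_congr rfl fun g _ => ?_
  rw [multiDeriv_sum, Finset.sum_mul, Finset.smul_sum]

theorem moyalCoeff_sum_right {ι : Type*} (θ : Fin d → Fin d → K) (n : ℕ) (s : Finset ι)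
    (F : ι → MvPolynomial (Fin d) K) (a : MvPolynomial (Fin d) K) :
    moyalCoeff θ n a (∑ x ∈ s, F x) = ∑ x ∈ s, moyalCoeff θ n a (F x) := by
  unfold moyalCoeff
  rw [← Finset.smul_sum]
  congr 1
  conv_rhs => rw [Finset.sum_comm]
  refine Finset.sum_congr rfl fun g _ => ?_
  rw [multiDeriv_sum, Finset.mul_sum, Finset.smul_sum]

theorem moyal_core (θ : Fin d → Fin d → K) (N : ℕ) (A B C : MvPolynomial (Fin d) K) :
    ∑ pq ∈ Finset.HasAntidiagonal.antidiagonal N, moyalCoeff θ pq.1 (moyalCoeff θ pq.2 A B) C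
  = ∑ pq ∈ Finset.HasAntidiagonal.antidiagonal N, moyalCoeff θ pq.1 A (moyalCoeff θ pq.2 B C) := by
  rw [Finset.sum_congr rfl fun pq _ => main_L θ pq.1 pq.2 A B C]
  conv_rhs => rw [Finset.sum_congr rfl fun pq _ => main_R θ pq.1 pq.2 A B C]
  have key := tri_sum (K := K) (Pop θ 0 2) (Pop θ 1 2) (Pop θ 0 1)
    (commute_Pop θ 0 2 1 2) (commute_Pop θ 0 1 0 2) (commute_Pop θ 0 1 1 2) N
  have happ := congrArg (fun T : Module.End K (MvPolynomial (Fin 3 × Fin d) K) =>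
    colSlot (T (eSlot 0 A * eSlot 1 B * eSlot 2 C))) key
  simpa only [LinearMap.sum_apply, LinearMap.smul_apply, map_sum, map_smul] using happ

/-- The Moyal–Weyl product is associative. -/
theorem moyalStar_assoc (θ : Fin d → Fin d → K) (hθ : ∀ i j, θ i j = -θ j i)
    (a b c : ℕ → MvPolynomial (Fin d) K) :
    moyalStar θ (moyalStar θ a b) c = moyalStar θ a (moyalStar θ b c) := by
  funext n
  have expandL : ∀ p m k : ℕ,
      moyalCoeff θ p (moyalStar θ a b m) (c k)
      = ∑ u ∈ Finset.HasAntidiagonal.antidiagonal m, ∑ v ∈ Finset.HasAntidiagonal.antidiagonal u.2,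
          moyalCoeff θ p (moyalCoeff θ u.1 (a v.1) (b v.2)) (c k) := by
    intro p m k
    simp only [moyalStar]
    rw [moyalCoeff_sum_left]
    exact Finset.sum_congr rfl fun u _ => moyalCoeff_sum_left θ p _ _ _
  have expandR : ∀ p i m : ℕ,
      moyalCoeff θ p (a i) (moyalStar θ b c m)
      = ∑ u ∈ Finset.HasAntidiagonal.antidiagonal m, ∑ v ∈ Finset.HasAntidiagonal.antidiagonal u.2,
          moyalCoeff θ p (a i) (moyalCoeff θ u.1 (b v.1) (c v.2)) := by
    intro p i m
    simp only [moyalStar]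
    rw [moyalCoeff_sum_right]
    exact Finset.sum_congr rfl fun u _ => moyalCoeff_sum_right θ p _ _ _
  show (∑ x ∈ Finset.HasAntidiagonal.antidiagonal n, ∑ y ∈ Finset.HasAntidiagonal.antidiagonal x.2,
      moyalCoeff θ x.1 (moyalStar θ a b y.1) (c y.2)) = _
  calc ∑ x ∈ Finset.HasAntidiagonal.antidiagonal n, ∑ y ∈ Finset.HasAntidiagonal.antidiagonal x.2,
        moyalCoeff θ x.1 (moyalStar θ a b y.1) (c y.2)
      = ∑ x ∈ Finset.HasAntidiagonal.antidiagonal n, ∑ y ∈ Finset.HasAntidiagonal.antidiagonal x.2,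
          ∑ u ∈ Finset.HasAntidiagonal.antidiagonal y.1, ∑ v ∈ Finset.HasAntidiagonal.antidiagonal u.2,
            moyalCoeff θ x.1 (moyalCoeff θ u.1 (a v.1) (b v.2)) (c y.2) := by
        refine Finset.sum_congr rfl fun x _ => Finset.sum_congr rfl fun y _ => ?_
        exact expandL x.1 y.1 y.2
    _ = ∑ w ∈ Finset.HasAntidiagonal.antidiagonal n, ∑ z ∈ Finset.HasAntidiagonal.antidiagonal w.2,
          ∑ r ∈ Finset.HasAntidiagonal.antidiagonal z.2, ∑ o ∈ Finset.HasAntidiagonal.antidiagonal w.1,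
            moyalCoeff θ o.1 (moyalCoeff θ o.2 (a z.1) (b r.1)) (c r.2) :=
        reindexL n (fun p q i j k => moyalCoeff θ p (moyalCoeff θ q (a i) (b j)) (c k))
    _ = ∑ w ∈ Finset.HasAntidiagonal.antidiagonal n, ∑ z ∈ Finset.HasAntidiagonal.antidiagonal w.2,
          ∑ r ∈ Finset.HasAntidiagonal.antidiagonal z.2, ∑ o ∈ Finset.HasAntidiagonal.antidiagonal w.1,
            moyalCoeff θ o.1 (a z.1) (moyalCoeff θ o.2 (b r.1) (c r.2)) := by
        refine Finset.sum_congr rfl fun w _ => Finset.sum_congr rfl fun z _ =>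
          Finset.sum_congr rfl fun r _ => ?_
        exact moyal_core θ w.1 (a z.1) (b r.1) (c r.2)
    _ = ∑ x ∈ Finset.HasAntidiagonal.antidiagonal n, ∑ y ∈ Finset.HasAntidiagonal.antidiagonal x.2,
          ∑ u ∈ Finset.HasAntidiagonal.antidiagonal y.2, ∑ v ∈ Finset.HasAntidiagonal.antidiagonal u.2,
            moyalCoeff θ x.1 (a y.1) (moyalCoeff θ u.1 (b v.1) (c v.2)) :=
        (reindexR n (fun p q i j k => moyalCoeff θ p (a i) (moyalCoeff θ q (b j) (c k)))).symm
    _ = _ := by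
        refine Finset.sum_congr rfl fun x _ => Finset.sum_congr rfl fun y _ => ?_
        exact (expandR x.1 y.1 y.2).symm
end

section
/- For the Weyl algebra A^W generated by x¹,...,x^d with relations x^i x^j − x^j x^i = θ^{ij} (θ a nondegenerate antisymmetric constant matrix over a field K of characteristic zero), every derivation of A^W is inner; equivalently, the Lie algebra Der(A^W) is isomorphic to (A^W/K, [,]) via a ↦ [a,−]. -/
/-!
STATEMENT 15: For the Weyl algebra `A^W` generated by `x¹,...,x^d` with
relations `x^i x^j − x^j x^i = θ^{ij}` (`θ` a nondegenerate antisymmetric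
constant matrix over a field `K` of characteristic zero), every derivation of
`A^W` is inner. -/

/-- The rewriting relation presenting the Weyl algebra:
`x^i x^j = x^j x^i + θ^{ij}`. -/
inductive weylRel (K : Type) [Field K] (d : ℕ) (θ : Fin d → Fin d → K) :
    FreeAlgebra K (Fin d) → FreeAlgebra K (Fin d) → Prop
  | rel (i j : Fin d) :
      weylRel K d θ (FreeAlgebra.ι K i * FreeAlgebra.ι K j)
        (FreeAlgebra.ι K j * FreeAlgebra.ι K i
          + algebraMap K (FreeAlgebra K (Fin d)) (θ i j))

/-- The Weyl algebra `A^W = K⟨x¹,...,x^d⟩/(x^i x^j − x^j x^i − θ^{ij})`. -/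
abbrev WeylAlgebra (K : Type) [Field K] (d : ℕ) (θ : Fin d → Fin d → K) :=
  RingQuot (weylRel K d θ)


open Finset

section Aux
set_option linter.unusedSectionVars false
variable {K : Type} [Field K] [CharZero K] {A : Type} [Ring A] [Algebra K A]

lemma pow_apply_zero_of_le (D : A →ₗ[K] A) {a : A} {n : ℕ} (h : (D ^ n) a = 0)
    {m : ℕ} (hm : n ≤ m) : (D ^ m) a = 0 := by
  obtain ⟨k, rfl⟩ := Nat.exists_eq_add_of_le hm
  rw [Nat.add_comm, pow_add, Module.End.mul_apply, h, map_zero]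

lemma nil_mul_aux (D : A →ₗ[K] A) (hD : ∀ a b, D (a * b) = D a * b + a * D b) :
    ∀ N n m (a b : A), n + m ≤ N → (D ^ n) a = 0 → (D ^ m) b = 0 →
      (D ^ (n + m)) (a * b) = 0 := by
  intro N
  induction N with
  | zero =>
    intro n m a b hnm ha hb
    have hn : n = 0 := by omega
    have hm : m = 0 := by omega
    subst hn; subst hm
    simp only [pow_zero, Module.End.one_apply] at ha hb ⊢
    rw [ha, zero_mul]
    rfl
  | succ N ih =>
    intro n m a b hnm ha hb
    match n, m with
    | 0, m =>
      simp only [pow_zero, Module.End.one_apply] at ha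
      rw [ha, zero_mul, map_zero]
    | n+1, 0 =>
      simp only [pow_zero, Module.End.one_apply] at hb
      rw [hb, mul_zero, map_zero]
    | n+1, m+1 =>
      have ha' : (D ^ n) (D a) = 0 := by
        rw [← Module.End.mul_apply, ← pow_succ]; exact ha
      have hb' : (D ^ m) (D b) = 0 := by
        rw [← Module.End.mul_apply, ← pow_succ]; exact hb
      have e : n + 1 + (m + 1) = (n + m + 1) + 1 := by omega
      rw [e, pow_succ, Module.End.mul_apply, hD, map_add]
      have h1 : (D ^ (n + m + 1)) (D a * b) = 0 := by
        rw [show n + m + 1 = n + (m + 1) from by omega]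
        exact ih n (m + 1) (D a) b (by omega) ha' hb
      have h2 : (D ^ (n + m + 1)) (a * D b) = 0 := by
        rw [show n + m + 1 = n + 1 + m from by omega]
        exact ih (n + 1) m a (D b) (by omega) ha hb'
      rw [h1, h2, add_zero]

lemma deriv_one_aux (D : A →ₗ[K] A) (hD : ∀ a b, D (a * b) = D a * b + a * D b) :
    D 1 = 0 := by
  have h := hD 1 1
  simp only [mul_one, one_mul] at h
  have h2 : D 1 + D 1 = D 1 + 0 := by rw [add_zero]; exact h.symm
  exact (add_left_cancel h2)

lemma deriv_pow_ker (D : A →ₗ[K] A) (hD : ∀ a b, D (a * b) = D a * b + a * D b)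
    {x : A} (hx : D x = 0) : ∀ k, D (x ^ k) = 0 := by
  intro k
  induction k with
  | zero => simpa using deriv_one_aux D hD
  | succ k ih => rw [pow_succ, hD, hx, ih, zero_mul, mul_zero, add_zero]

lemma deriv_pow_x (D : A →ₗ[K] A) (hD : ∀ a b, D (a * b) = D a * b + a * D b)
    {x : A} (hx : D x = 1) :
    ∀ k : ℕ, D (x ^ (k + 1)) = (((k : K) + 1)) • x ^ k := by
  intro k
  induction k with
  | zero => simpa using hx
  | succ k ih =>
    rw [show (k + 1 + 1) = (k + 1) + 1 from rfl, pow_succ]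
    rw [hD, ih, hx, mul_one]
    rw [smul_mul_assoc, ← pow_succ]
    module

lemma comm_pow (D D' : A →ₗ[K] A) (hc : ∀ b, D' (D b) = D (D' b)) :
    ∀ k b, D' ((D ^ k) b) = (D ^ k) (D' b) := by
  intro k
  induction k with
  | zero => intro b; simp
  | succ k ih =>
    intro b
    simp only [pow_succ, Module.End.mul_apply]
    rw [ih, hc]

lemma antideriv (D : A →ₗ[K] A) (hD : ∀ a b, D (a * b) = D a * b + a * D b)
    (x : A) (hx : D x = 1) (a : A) (n : ℕ) (hn : (D ^ n) a = 0) :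
    ∃ u : A, D u = a ∧
      ∀ D' : A →ₗ[K] A, (∀ p q, D' (p * q) = D' p * q + p * D' q) →
        (∀ b, D' (D b) = D (D' b)) → D' x = 0 → D' a = 0 → D' u = 0 := by
  set f : ℕ → A := fun k => ((-1 : K) ^ k * ((k.factorial : K))⁻¹) • (x ^ k * (D ^ k) a)
    with hf
  refine ⟨∑ k ∈ range n, ((-1 : K) ^ k * (((k+1).factorial : K))⁻¹) • (x ^ (k+1) * (D ^ k) a),
    ?_, ?_⟩
  · rw [map_sum]
    have key : ∀ k ∈ range n,
        D (((-1 : K) ^ k * (((k+1).factorial : K))⁻¹) • (x ^ (k+1) * (D ^ k) a))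
          = f k - f (k+1) := by
      intro k _
      rw [map_smul, hD, deriv_pow_x D hD hx]
      rw [show D ((D ^ k) a) = (D ^ (k+1)) a from by
        rw [pow_succ', Module.End.mul_apply]]
      rw [smul_add, smul_mul_assoc]
      rw [smul_smul]
      have hfac : (((k+1).factorial : K)) = ((k : K) + 1) * (k.factorial : K) := by
        rw [Nat.factorial_succ]; push_cast; ring
      have hk0 : ((k : K) + 1) ≠ 0 := by
        have e : ((k : K) + 1) = ((k + 1 : ℕ) : K) := by push_cast; ring
        rw [e]
        exact Nat.cast_ne_zero.mpr (Nat.succ_ne_zero k)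
      have h1 : (-1 : K) ^ k * (((k+1).factorial : K))⁻¹ * ((k : K) + 1)
          = (-1 : K) ^ k * ((k.factorial : K))⁻¹ := by
        rw [hfac, mul_inv]
        have hk1 : ((k.factorial : K)) ≠ 0 :=
          Nat.cast_ne_zero.mpr (Nat.factorial_ne_zero k)
        field_simp
      rw [h1]
      have h2 : ((-1 : K) ^ k * (((k+1).factorial : K))⁻¹) • (x ^ (k+1) * (D ^ (k+1)) a)
          = - f (k+1) := by
        rw [hf]
        dsimp only
        rw [← neg_smul]
        congr 1
        ring
      rw [h2, hf]
      dsimp only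
      abel
    rw [Finset.sum_congr rfl key, Finset.sum_range_sub' f n]
    have hf0 : f 0 = a := by simp [hf]
    have hfn : f n = 0 := by rw [hf]; dsimp only; rw [hn, mul_zero, smul_zero]
    rw [hf0, hfn, sub_zero]
  · intro D' hD' hcomm hx' ha'
    rw [map_sum]
    refine Finset.sum_eq_zero fun k _ => ?_
    rw [map_smul, hD', deriv_pow_ker D' hD' hx', comm_pow D D' hcomm, ha', map_zero,
      zero_mul, mul_zero, add_zero, smul_zero]

end Aux

section Poin
set_option linter.unusedSectionVars false
variable {K : Type} [Field K] [CharZero K] {A : Type} [Ring A] [Algebra K A]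

lemma poincare (d : ℕ) (D : Fin d → A →ₗ[K] A)
    (hder : ∀ i (a b : A), D i (a * b) = D i a * b + a * D i b)
    (hcomm : ∀ i j (a : A), D i (D j a) = D j (D i a))
    (x : Fin d → A) (hx : ∀ i j, D i (x j) = if i = j then 1 else 0)
    (hnil : ∀ i (a : A), ∃ n, ((D i) ^ n) a = 0) :
    ∀ a : Fin d → A, (∀ i j, D i (a j) = D j (a i)) →
      ∃ w, ∀ i, D i w = a i := by
  suffices H : ∀ m : ℕ, ∀ a : Fin d → A, (∀ i j, D i (a j) = D j (a i)) →
      ∃ w, (∀ i : Fin d, (i : ℕ) < m → D i w = a i) ∧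
        ∀ j : Fin d, m ≤ (j : ℕ) → (∀ i : Fin d, (i : ℕ) < m → D j (a i) = 0) →
          D j w = 0 by
    intro a ha
    obtain ⟨w, hw1, _⟩ := H d a ha
    exact ⟨w, fun i => hw1 i i.isLt⟩
  intro m
  induction m with
  | zero =>
    intro a _
    exact ⟨0, fun i h => absurd h (by omega), fun j _ _ => map_zero _⟩
  | succ m ih =>
    intro a ha
    by_cases hm : m < d
    · set im : Fin d := ⟨m, hm⟩ with him
      obtain ⟨n, hn⟩ := hnil im (a im)
      have hxim : D im (x im) = 1 := by rw [hx]; simp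
      obtain ⟨u, hu1, hu2⟩ := antideriv (D im) (hder im) (x im) hxim (a im) n hn
      set b : Fin d → A := fun j => a j - D j u with hb
      have hbc : ∀ i j, D i (b j) = D j (b i) := by
        intro i j
        simp only [hb, map_sub]
        rw [ha i j, hcomm i j u]
      obtain ⟨w', hw1', hw2'⟩ := ih b hbc
      refine ⟨u + w', ?_, ?_⟩
      · intro i hi
        rcases Nat.lt_succ_iff_lt_or_eq.mp hi with h | h
        · rw [map_add, hw1' i h]
          simp [hb]
        · have : i = im := Fin.ext h
          subst this
          rw [map_add, hu1]
          have hz : D im w' = 0 := by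
            refine hw2' im (le_refl m) ?_
            intro i' hi'
            simp only [hb, map_sub]
            rw [hcomm im i' u, hu1, ha im i', sub_self]
          rw [hz, add_zero]
      · intro j hj hja
        have hju : D j u = 0 := by
          refine hu2 (D j) (hder j) (fun c => hcomm j im c) ?_ ?_
          · rw [hx]
            have hne : j ≠ im := by
              refine Fin.ne_of_val_ne ?_
              show (j : ℕ) ≠ m
              omega
            simp [hne]
          · exact hja im (Nat.lt_succ_self m)
        have hjw' : D j w' = 0 := by
          refine hw2' j (by omega) ?_
          intro i hi
          simp only [hb, map_sub]
          rw [hcomm j i u, hju, map_zero, hja i (by omega), sub_self]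
        rw [map_add, hju, hjw', add_zero]
    · -- m ≥ d : reuse ih
      obtain ⟨w, hw1, hw2⟩ := ih a ha
      refine ⟨w, fun i _ => hw1 i (by omega), fun j hj _ => ?_⟩
      have := j.isLt; omega
end Poin


/-- Every (`K`-linear) derivation of the Weyl algebra is inner, i.e. of the
form `a ↦ wa − aw`; equivalently `Der(A^W) ≅ (A^W/K, [,])` via `a ↦ [a,−]`. -/
theorem weylAlgebra_derivation_inner
    (K : Type) [Field K] [CharZero K] (d : ℕ) (θ : Fin d → Fin d → K)
    (hanti : ∀ i j, θ i j = -θ j i)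
    (hnondeg : ∀ v : Fin d → K, (∀ j, ∑ i, v i * θ i j = 0) → v = 0)
    (δ : WeylAlgebra K d θ →ₗ[K] WeylAlgebra K d θ)
    (hLeib : ∀ a b : WeylAlgebra K d θ, δ (a * b) = δ a * b + a * δ b) :
    ∃ w : WeylAlgebra K d θ, ∀ a : WeylAlgebra K d θ, δ a = w * a - a * w := by
  classical
  set X : Fin d → WeylAlgebra K d θ :=
    fun i => RingQuot.mkAlgHom K (weylRel K d θ) (FreeAlgebra.ι K i) with hXdef
  -- the defining relation
  have hrel : ∀ i j, X i * X j = X j * X i + algebraMap K (WeylAlgebra K d θ) (θ i j) := by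
    intro i j
    have h := RingQuot.mkAlgHom_rel K (weylRel.rel (K := K) (d := d) (θ := θ) i j)
    rw [map_mul, map_add, map_mul, AlgHom.commutes] at h
    exact h
  have hsub : ∀ i j, X i * X j - X j * X i = algebraMap K (WeylAlgebra K d θ) (θ i j) := by
    intro i j; rw [hrel i j]; abel
  -- induction principle for the Weyl algebra
  have weyl_ind : ∀ {P : WeylAlgebra K d θ → Prop},
      (∀ r : K, P (algebraMap K (WeylAlgebra K d θ) r)) → (∀ i, P (X i)) →
      (∀ a b, P a → P b → P (a * b)) → (∀ a b, P a → P b → P (a + b)) → ∀ a, P a := by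
    intro P h0 h1 hmul hadd a
    obtain ⟨f, rfl⟩ := RingQuot.mkAlgHom_surjective K (weylRel K d θ) a
    refine FreeAlgebra.induction K (Fin d)
      (motive := fun f => P (RingQuot.mkAlgHom K (weylRel K d θ) f)) ?_ ?_ ?_ ?_ f
    · intro r; rw [AlgHom.commutes]; exact h0 r
    · intro i; exact h1 i
    · intro u v hu hv; rw [map_mul]; exact hmul _ _ hu hv
    · intro u v hu hv; rw [map_add]; exact hadd _ _ hu hv
  -- inverse matrix of θ
  have hker : ∀ v : Fin d → K, (Matrix.of θ).vecMulLinear v = 0 → v = 0 := by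
    intro v hv
    apply hnondeg
    intro j
    have h := congrFun hv j
    simpa [Matrix.vecMulLinear_apply, Matrix.vecMul, dotProduct] using h
  have hinj : Function.Injective ((Matrix.of θ).vecMulLinear) :=
    (injective_iff_map_eq_zero _).mpr hker
  have hsurj := (LinearMap.injective_iff_surjective).mp hinj
  choose c hc using fun i => hsurj (Pi.single i 1)
  have hc1 : ∀ i j, ∑ k, c i k * θ k j = if i = j then 1 else 0 := by
    intro i j
    have h := congrFun (hc i) j
    simp only [Matrix.vecMulLinear_apply, Matrix.vecMul, dotProduct, Matrix.of_apply,
      Pi.single_apply] at h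
    rw [h]
    by_cases hij : i = j
    · simp [hij]
    · rw [if_neg hij, if_neg (fun hh => hij hh.symm)]
  have hCM : (Matrix.of c) * (Matrix.of θ) = 1 := by
    ext i j
    rw [Matrix.mul_apply]
    simp only [Matrix.of_apply, Matrix.one_apply]
    exact hc1 i j
  have hMC : (Matrix.of θ) * (Matrix.of c) = 1 := mul_eq_one_comm.mp hCM
  have hc2 : ∀ i j, ∑ k, θ i k * c k j = if i = j then 1 else 0 := by
    intro i j
    have h := congrFun (congrFun hMC i) j
    rw [Matrix.mul_apply] at h
    simpa [Matrix.one_apply] using h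
  -- the dual elements p i and the derivations D i
  set p : Fin d → WeylAlgebra K d θ := fun i => ∑ k, c i k • X k with hpdef
  set D : Fin d → (WeylAlgebra K d θ →ₗ[K] WeylAlgebra K d θ) :=
    fun i => LinearMap.mulLeft K (p i) - LinearMap.mulRight K (p i) with hDdef
  have hDapp : ∀ i a, D i a = p i * a - a * p i := by
    intro i a
    simp [hDdef, LinearMap.sub_apply, LinearMap.mulLeft_apply, LinearMap.mulRight_apply]
  have hder : ∀ i (a b : WeylAlgebra K d θ), D i (a * b) = D i a * b + a * D i b := by
    intro i a b; simp only [hDapp, mul_sub, sub_mul, mul_assoc]; abel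
  -- brackets with the p's
  have hpmul : ∀ i (v : WeylAlgebra K d θ),
      p i * v - v * p i = ∑ k, c i k • (X k * v - v * X k) := by
    intro i v
    have h1 : p i * v = ∑ k, c i k • (X k * v) := by
      rw [hpdef]; dsimp only
      rw [Finset.sum_mul]
      exact Finset.sum_congr rfl fun k _ => smul_mul_assoc _ _ _
    have h2 : v * p i = ∑ k, c i k • (v * X k) := by
      rw [hpdef]; dsimp only
      rw [Finset.mul_sum]
      exact Finset.sum_congr rfl fun k _ => (mul_smul_comm _ _ _)
    rw [h1, h2, ← Finset.sum_sub_distrib]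
    exact Finset.sum_congr rfl fun k _ => by simp only [smul_sub]
  have hpX : ∀ i j, p i * X j - X j * p i
      = algebraMap K (WeylAlgebra K d θ) (if i = j then 1 else 0) := by
    intro i j
    rw [hpmul]
    have : ∀ k ∈ Finset.univ, c i k • (X k * X j - X j * X k)
        = algebraMap K (WeylAlgebra K d θ) (c i k * θ k j) := by
      intro k _
      rw [hsub k j, Algebra.smul_def, ← map_mul]
    rw [Finset.sum_congr rfl this, ← map_sum, hc1]
  have hpp : ∀ i j, p i * p j - p j * p i
      = algebraMap K (WeylAlgebra K d θ) (c j i) := by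
    intro i j
    have h1 : p i * p j - p j * p i = ∑ l, c j l • (p i * X l - X l * p i) := by
      conv_lhs => rw [show p j = ∑ l, c j l • X l from by rw [hpdef]]
      rw [Finset.mul_sum, Finset.sum_mul, ← Finset.sum_sub_distrib]
      refine Finset.sum_congr rfl fun l _ => ?_
      rw [mul_smul_comm, smul_mul_assoc]
      simp only [smul_sub]
    rw [h1]
    have h2 : ∀ l ∈ Finset.univ, c j l • (p i * X l - X l * p i)
        = algebraMap K (WeylAlgebra K d θ) (c j l * if i = l then 1 else 0) := by
      intro l _
      rw [hpX i l, Algebra.smul_def, ← map_mul]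
    rw [Finset.sum_congr rfl h2, ← map_sum]
    congr 1
    simp [mul_ite, Finset.sum_ite_eq]
  have hcomm : ∀ i j (a : WeylAlgebra K d θ), D i (D j a) = D j (D i a) := by
    intro i j a
    have key : (p i * p j - p j * p i) * a = a * (p i * p j - p j * p i) := by
      rw [hpp i j]; exact Algebra.commutes _ _
    have expand : D i (D j a) - D j (D i a)
        = (p i * p j - p j * p i) * a - a * (p i * p j - p j * p i) := by
      simp only [hDapp, mul_sub, sub_mul, mul_assoc]; abel
    have hz : D i (D j a) - D j (D i a) = 0 := by rw [expand, key, sub_self]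
    exact sub_eq_zero.mp hz
  have hDX : ∀ i j, D i (X j)
      = algebraMap K (WeylAlgebra K d θ) (if i = j then 1 else 0) := by
    intro i j; rw [hDapp]; exact hpX i j
  have hxW : ∀ i j, D i (X j) = if i = j then 1 else 0 := by
    intro i j; rw [hDX i j]; split <;> simp
  have hDalg : ∀ i r, D i (algebraMap K (WeylAlgebra K d θ) r) = 0 := by
    intro i r
    rw [hDapp, ← Algebra.commutes r (p i), sub_self]
  -- local nilpotence
  have hnil : ∀ i (a : WeylAlgebra K d θ), ∃ n, ((D i) ^ n) a = 0 := by
    intro i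
    refine weyl_ind ?_ ?_ ?_ ?_
    · intro r; exact ⟨1, by rw [pow_one]; exact hDalg i r⟩
    · intro j
      refine ⟨2, ?_⟩
      rw [pow_two, Module.End.mul_apply, hDX i j]
      exact hDalg i _
    · rintro a b ⟨n, hn⟩ ⟨m, hm⟩
      exact ⟨n + m, nil_mul_aux (D i) (hder i) (n + m) n m a b le_rfl hn hm⟩
    · rintro a b ⟨n, hn⟩ ⟨m, hm⟩
      refine ⟨max n m, ?_⟩
      rw [map_add, pow_apply_zero_of_le (D i) hn (le_max_left n m),
        pow_apply_zero_of_le (D i) hm (le_max_right n m), add_zero]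
  -- δ kills scalars
  have hδ1 : δ 1 = 0 := deriv_one_aux δ hLeib
  have hδalg : ∀ r, δ (algebraMap K (WeylAlgebra K d θ) r) = 0 := by
    intro r
    rw [Algebra.algebraMap_eq_smul_one, map_smul, hδ1, smul_zero]
  -- the closed family
  set aa : Fin d → WeylAlgebra K d θ := fun i => -δ (p i) with haadef
  have hpδ : ∀ i j, p i * δ (p j) - δ (p j) * p i = p j * δ (p i) - δ (p i) * p j := by
    intro i j
    have h0 : δ (p i * p j - p j * p i) = 0 := by rw [hpp i j]; exact hδalg _
    rw [map_sub, hLeib, hLeib] at h0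
    have h1 : (p i * δ (p j) - δ (p j) * p i) - (p j * δ (p i) - δ (p i) * p j)
        = δ (p i) * p j + p i * δ (p j) - (δ (p j) * p i + p j * δ (p i)) := by abel
    rw [h0] at h1
    exact sub_eq_zero.mp h1
  have hclosed : ∀ i j, D i (aa j) = D j (aa i) := by
    intro i j
    rw [show aa j = -δ (p j) from by rw [haadef],
      show aa i = -δ (p i) from by rw [haadef], map_neg, map_neg,
      hDapp i, hDapp j, hpδ i j]
  obtain ⟨w, hw⟩ := poincare d D hder hcomm X hxW hnil aa hclosed
  have hwp : ∀ i, p i * w - w * p i = -δ (p i) := by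
    intro i
    have h := hw i
    rwa [hDapp, haadef] at h
  -- the bracket identities for X
  set e : Fin d → WeylAlgebra K d θ := fun j => w * X j - X j * w - δ (X j) with hedef
  have hsum : ∀ i, ∑ k, c i k • e k = 0 := by
    intro i
    have h1 : ∑ k, c i k • (w * X k - X k * w) = -(p i * w - w * p i) := by
      rw [hpmul i w, ← Finset.sum_neg_distrib]
      refine Finset.sum_congr rfl fun k _ => ?_
      simp only [smul_sub]
      abel
    have h2 : ∑ k, c i k • δ (X k) = δ (p i) := by
      rw [hpdef]; dsimp only
      rw [map_sum]
      exact Finset.sum_congr rfl fun k _ => (map_smul δ _ _).symm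
    calc ∑ k, c i k • e k
        = ∑ k, (c i k • (w * X k - X k * w) - c i k • δ (X k)) := by
          refine Finset.sum_congr rfl fun k _ => ?_
          rw [hedef]; dsimp only
          simp only [smul_sub]
      _ = (∑ k, c i k • (w * X k - X k * w)) - ∑ k, c i k • δ (X k) :=
          Finset.sum_sub_distrib _ _
      _ = -(p i * w - w * p i) - δ (p i) := by rw [h1, h2]
      _ = 0 := by rw [hwp i]; simp
  have he : ∀ j, e j = 0 := by
    intro j
    calc e j = ∑ k, (if j = k then (1 : K) else 0) • e k := by
          simp [ite_smul]
      _ = ∑ k, (∑ i, θ j i * c i k) • e k :=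
          Finset.sum_congr rfl fun k _ => by rw [hc2 j k]
      _ = ∑ k, ∑ i, (θ j i * c i k) • e k :=
          Finset.sum_congr rfl fun k _ => Finset.sum_smul
      _ = ∑ i, ∑ k, (θ j i * c i k) • e k := Finset.sum_comm
      _ = ∑ i, θ j i • ∑ k, c i k • e k := by
          refine Finset.sum_congr rfl fun i _ => ?_
          rw [Finset.smul_sum]
          exact Finset.sum_congr rfl fun k _ => mul_smul _ _ _
      _ = 0 := by simp [hsum]
  -- conclusion
  refine ⟨w, weyl_ind ?_ ?_ ?_ ?_⟩
  · intro r
    rw [hδalg r, Algebra.commutes r w, sub_self]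
  · intro i
    have h := he i
    rw [hedef] at h; dsimp only at h
    have := sub_eq_zero.mp h
    exact this.symm
  · intro a b ha hb
    rw [hLeib a b, ha, hb]
    simp only [mul_sub, sub_mul, mul_assoc]
    abel
  · intro a b ha hb
    rw [map_add, ha, hb]
    simp only [mul_add, add_mul]
    abel
end
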